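/- arXiv:2111.02927 — 5 statements merged into one kernel-verified Lean document; each statement's English description precedes it below -/
import Mathlib

section
/- Let all variables be discrete with joint pmf p. Suppose (a) Y ⊥ Z | (A,M,X), (b) W ⊥ (A,Z) | (M,X), (c) completeness: for all a,x, if E[g(M) | Z=z, A=a, X=x] = 0 for all z then g(M)=0 a.s., and (d) h satisfies E[Y | Z=z, A=a', X=x] = E[h(W,a',x) | Z=z, A=a', X=x] for all z,x. Then for all m,x with p(m,a',x)>0: E[Y | M=m, A=a', X=x] = Σ_w h(w,a',x) p(w | M=m, X=x). -/
open Finset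
open scoped Classical

noncomputable section

/-- Probability of an event under weights `mu`. -/
def pr {O : Type} [Fintype O] (mu : O -> Real) (s : O -> Prop) : Real :=
  Finset.univ.sum (fun w => if s w then mu w else 0)

/-- Conditional probability `P(s | t)`. -/
def cpr {O : Type} [Fintype O] (mu : O -> Real) (s t : O -> Prop) : Real :=
  pr mu (fun w => s w /\ t w) / pr mu t

/-- Expectation of `f`. -/
def expec {O : Type} [Fintype O] (mu : O -> Real) (f : O -> Real) : Real :=
  Finset.univ.sum (fun w => f w * mu w)

/-- Conditional expectation `E[f | t]`. -/
def cexp {O : Type} [Fintype O] (mu : O -> Real) (f : O -> Real) (t : O -> Prop) : Real :=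
  (Finset.univ.sum (fun w => if t w then f w * mu w else 0)) / pr mu t

/-- The numerator of `cexp`: sum of `f * mu` over the event `t`. -/
def nsum {O : Type} [Fintype O] (mu : O -> Real) (f : O -> Real) (t : O -> Prop) : Real :=
  Finset.univ.sum (fun w => if t w then f w * mu w else 0)

variable {O : Type} [Fintype O]

lemma cexp_eq (mu : O → ℝ) (f : O → ℝ) (t : O → Prop) :
    cexp mu f t = nsum mu f t / pr mu t := rfl

lemma pr_nonneg (mu : O → ℝ) (h0 : ∀ o, 0 ≤ mu o) (s : O → Prop) : 0 ≤ pr mu s := by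
  apply Finset.sum_nonneg; intro o _; split <;> [exact h0 o; rfl]

lemma pr_congr (mu : O → ℝ) {s t : O → Prop} (h : ∀ o, s o ↔ t o) : pr mu s = pr mu t := by
  unfold pr; apply Finset.sum_congr rfl; intro o _; simp [h o]

lemma nsum_congr (mu : O → ℝ) (f : O → ℝ) {s t : O → Prop} (h : ∀ o, s o ↔ t o) :
    nsum mu f s = nsum mu f t := by
  unfold nsum; apply Finset.sum_congr rfl; intro o _; simp [h o]

lemma pr_mono (mu : O → ℝ) (h0 : ∀ o, 0 ≤ mu o) {s t : O → Prop} (h : ∀ o, s o → t o) :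
    pr mu s ≤ pr mu t := by
  apply Finset.sum_le_sum; intro o _
  by_cases hs : s o
  · simp [hs, h o hs]
  · simp only [hs, if_false]; split <;> [exact h0 o; rfl]

lemma mu_zero_of_pr_zero (mu : O → ℝ) (h0 : ∀ o, 0 ≤ mu o) {t : O → Prop}
    (h : pr mu t = 0) : ∀ o, t o → mu o = 0 := by
  intro o ho
  have := (Finset.sum_eq_zero_iff_of_nonneg
    (by intro i _; split <;> [exact h0 i; rfl])).mp h o (Finset.mem_univ o)
  simpa [ho] using this

lemma nsum_zero (mu : O → ℝ) {t : O → Prop} (f : O → ℝ)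
    (h : ∀ o, t o → mu o = 0) : nsum mu f t = 0 := by
  apply Finset.sum_eq_zero; intro o _
  by_cases ht : t o
  · simp [ht, h o ht]
  · simp [ht]

lemma cexp_of_pr_zero (mu : O → ℝ) (h0 : ∀ o, 0 ≤ mu o) (f : O → ℝ) {t : O → Prop}
    (h : pr mu t = 0) : cexp mu f t = 0 := by
  rw [cexp_eq, nsum_zero mu f (mu_zero_of_pr_zero mu h0 h), zero_div]

lemma partition {TV : Type} [Fintype TV] (mu : O → ℝ) (V : O → TV) (E : O → Prop) (f : O → ℝ) :
    (Finset.univ.sum fun v : TV => nsum mu f (fun o => V o = v ∧ E o)) = nsum mu f E := by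
  unfold nsum
  rw [Finset.sum_comm]
  apply Finset.sum_congr rfl; intro o _
  by_cases hE : E o
  · simp only [hE, and_true]
    rw [Finset.sum_ite_eq univ (V o) (fun _ => f o * mu o)]
    simp [hE]
  · simp [hE]

lemma pr_partition {TV : Type} [Fintype TV] (mu : O → ℝ) (V : O → TV) (E : O → Prop) :
    (Finset.univ.sum fun v : TV => pr mu (fun o => V o = v ∧ E o)) = pr mu E := by
  unfold pr
  rw [Finset.sum_comm]
  apply Finset.sum_congr rfl; intro o _
  by_cases hE : E o
  · simp only [hE, and_true]
    rw [Finset.sum_ite_eq univ (V o) (fun _ => mu o)]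
    simp [hE]
  · simp [hE]

lemma mul_pr {TV : Type} [Fintype TV] (mu : O → ℝ) (V : O → TV)
    (E : O → Prop) (g : TV → ℝ) (v : TV) :
    g v * pr mu (fun o => V o = v ∧ E o) = nsum mu (fun o => g (V o)) (fun o => V o = v ∧ E o) := by
  unfold pr nsum
  rw [Finset.mul_sum]
  apply Finset.sum_congr rfl; intro o _
  by_cases hc : V o = v ∧ E o
  · simp [hc, hc.1]
  · simp [hc]

lemma sum_y (mu : O → ℝ) (Y : O → ℝ) (E : O → Prop) :
    ((Finset.univ.image Y).sum fun y => y * pr mu (fun o => Y o = y ∧ E o)) = nsum mu Y E := by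
  simp only [pr, nsum, Finset.mul_sum]
  rw [Finset.sum_comm]
  apply Finset.sum_congr rfl; intro o _
  by_cases hE : E o
  · simp only [hE, and_true]
    rw [Finset.sum_congr rfl (fun y _ => ?_),
      Finset.sum_ite_eq (Finset.univ.image Y) (Y o) (fun y => Y o * mu o)]
    · simp [Finset.mem_image, hE]
    · by_cases hy : Y o = y
      · simp [hy]
      · simp [hy]
  · simp [hE]

theorem stmt0
    {O TA TM TZ TW TX : Type}
    [Fintype O] [Fintype TA] [Fintype TM] [Fintype TZ] [Fintype TW] [Fintype TX]
    [DecidableEq TA] [DecidableEq TM] [DecidableEq TZ] [DecidableEq TW] [DecidableEq TX]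
    (mu : O -> Real) (hmu0 : forall o : O, 0 <= mu o)
    (hmu1 : Finset.univ.sum mu = 1)
    (A : O -> TA) (Y : O -> Real) (M : O -> TM) (Z : O -> TZ) (W : O -> TW) (X : O -> TX)
    (a' : TA) (h : TW -> TA -> TX -> Real)
    (hYZ : forall (y : Real) (z : TZ) (t : TA) (m : TM) (x : TX),
      pr mu (fun o => Y o = y /\ Z o = z /\ A o = t /\ M o = m /\ X o = x) *
        pr mu (fun o => A o = t /\ M o = m /\ X o = x) =
      pr mu (fun o => Y o = y /\ A o = t /\ M o = m /\ X o = x) *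
        pr mu (fun o => Z o = z /\ A o = t /\ M o = m /\ X o = x))
    (hWA : forall (v : TW) (t : TA) (z : TZ) (m : TM) (x : TX),
      pr mu (fun o => W o = v /\ A o = t /\ Z o = z /\ M o = m /\ X o = x) *
        pr mu (fun o => M o = m /\ X o = x) =
      pr mu (fun o => W o = v /\ M o = m /\ X o = x) *
        pr mu (fun o => A o = t /\ Z o = z /\ M o = m /\ X o = x))
    (hcomp : forall (g : TM -> Real) (t : TA) (x : TX),
      (forall z : TZ, cexp mu (fun o => g (M o)) (fun o => Z o = z /\ A o = t /\ X o = x) = 0) ->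
      forall m : TM, 0 < pr mu (fun o => M o = m /\ A o = t /\ X o = x) -> g m = 0)
    (hbridge : forall (z : TZ) (x : TX),
      cexp mu Y (fun o => Z o = z /\ A o = a' /\ X o = x) =
      cexp mu (fun o => h (W o) a' x) (fun o => Z o = z /\ A o = a' /\ X o = x)) :
    forall (m : TM) (x : TX), 0 < pr mu (fun o => M o = m /\ A o = a' /\ X o = x) ->
      cexp mu Y (fun o => M o = m /\ A o = a' /\ X o = x) =
      Finset.univ.sum (fun v : TW =>
        h v a' x * cpr mu (fun o => W o = v) (fun o => M o = m /\ X o = x)) := by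
  intro m x hpos
  set g : TM → ℝ := fun m' =>
    if 0 < pr mu (fun o => M o = m' ∧ A o = a' ∧ X o = x) then
      cexp mu Y (fun o => M o = m' ∧ A o = a' ∧ X o = x) -
        Finset.univ.sum (fun v : TW =>
          h v a' x * cpr mu (fun o => W o = v) (fun o => M o = m' ∧ X o = x))
    else 0 with hgdef
  -- key per-m' identity
  have hterm : ∀ (z : TZ) (m' : TM),
      g m' * pr mu (fun o => M o = m' ∧ Z o = z ∧ A o = a' ∧ X o = x) =
      nsum mu Y (fun o => M o = m' ∧ Z o = z ∧ A o = a' ∧ X o = x)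
      - Finset.univ.sum (fun v : TW =>
          h v a' x * pr mu (fun o => W o = v ∧ M o = m' ∧ Z o = z ∧ A o = a' ∧ X o = x)) := by
    intro z m'
    by_cases hc : 0 < pr mu (fun o => M o = m' ∧ A o = a' ∧ X o = x)
    · -- positive case
      have hMX : 0 < pr mu (fun o => M o = m' ∧ X o = x) :=
        lt_of_lt_of_le hc (pr_mono mu hmu0 (fun o ho => ⟨ho.1, ho.2.2⟩))
      have hgval : g m' = cexp mu Y (fun o => M o = m' ∧ A o = a' ∧ X o = x) -
          Finset.univ.sum (fun v : TW =>
            h v a' x * cpr mu (fun o => W o = v) (fun o => M o = m' ∧ X o = x)) := by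
        rw [hgdef]; exact if_pos hc
      have key1 :
          nsum mu Y (fun o => M o = m' ∧ Z o = z ∧ A o = a' ∧ X o = x) *
            pr mu (fun o => M o = m' ∧ A o = a' ∧ X o = x) =
          nsum mu Y (fun o => M o = m' ∧ A o = a' ∧ X o = x) *
            pr mu (fun o => M o = m' ∧ Z o = z ∧ A o = a' ∧ X o = x) := by
        have e1 : nsum mu Y (fun o => M o = m' ∧ Z o = z ∧ A o = a' ∧ X o = x) =
            ((Finset.univ.image Y).sum fun y =>
              y * pr mu (fun o => Y o = y ∧ Z o = z ∧ A o = a' ∧ M o = m' ∧ X o = x)) :=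
          (nsum_congr mu Y (fun o => by tauto)).trans
            (sum_y mu Y (fun o => Z o = z ∧ A o = a' ∧ M o = m' ∧ X o = x)).symm
        have e2 : nsum mu Y (fun o => M o = m' ∧ A o = a' ∧ X o = x) =
            ((Finset.univ.image Y).sum fun y =>
              y * pr mu (fun o => Y o = y ∧ A o = a' ∧ M o = m' ∧ X o = x)) :=
          (nsum_congr mu Y (fun o => by tauto)).trans
            (sum_y mu Y (fun o => A o = a' ∧ M o = m' ∧ X o = x)).symm
        have e3 : pr mu (fun o => M o = m' ∧ A o = a' ∧ X o = x) =
            pr mu (fun o => A o = a' ∧ M o = m' ∧ X o = x) :=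
          pr_congr mu (fun o => by tauto)
        have e4 : pr mu (fun o => M o = m' ∧ Z o = z ∧ A o = a' ∧ X o = x) =
            pr mu (fun o => Z o = z ∧ A o = a' ∧ M o = m' ∧ X o = x) :=
          pr_congr mu (fun o => by tauto)
        rw [e1, e2, e3, e4, Finset.sum_mul, Finset.sum_mul]
        apply Finset.sum_congr rfl
        intro y _
        rw [mul_assoc, mul_assoc, hYZ y z a' m' x]
      have key2 : ∀ v : TW,
          h v a' x * cpr mu (fun o => W o = v) (fun o => M o = m' ∧ X o = x) *
            pr mu (fun o => M o = m' ∧ Z o = z ∧ A o = a' ∧ X o = x) =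
          h v a' x * pr mu (fun o => W o = v ∧ M o = m' ∧ Z o = z ∧ A o = a' ∧ X o = x) := by
        intro v
        have hwa := hWA v a' z m' x
        have e5 : pr mu (fun o => M o = m' ∧ Z o = z ∧ A o = a' ∧ X o = x) =
            pr mu (fun o => A o = a' ∧ Z o = z ∧ M o = m' ∧ X o = x) :=
          pr_congr mu (fun o => by tauto)
        have e6 : pr mu (fun o => W o = v ∧ M o = m' ∧ Z o = z ∧ A o = a' ∧ X o = x) =
            pr mu (fun o => W o = v ∧ A o = a' ∧ Z o = z ∧ M o = m' ∧ X o = x) :=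
          pr_congr mu (fun o => by tauto)
        rw [cpr, e5, e6, mul_assoc, div_mul_eq_mul_div, ← hwa, mul_div_assoc,
          div_self hMX.ne', mul_one]
      calc g m' * pr mu (fun o => M o = m' ∧ Z o = z ∧ A o = a' ∧ X o = x) =
          cexp mu Y (fun o => M o = m' ∧ A o = a' ∧ X o = x) *
            pr mu (fun o => M o = m' ∧ Z o = z ∧ A o = a' ∧ X o = x) -
          (Finset.univ.sum (fun v : TW =>
            h v a' x * cpr mu (fun o => W o = v) (fun o => M o = m' ∧ X o = x))) *
            pr mu (fun o => M o = m' ∧ Z o = z ∧ A o = a' ∧ X o = x) := by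
            rw [hgval, sub_mul]
        _ = nsum mu Y (fun o => M o = m' ∧ Z o = z ∧ A o = a' ∧ X o = x)
            - Finset.univ.sum (fun v : TW =>
                h v a' x * pr mu (fun o => W o = v ∧ M o = m' ∧ Z o = z ∧ A o = a' ∧ X o = x)) := by
            congr 1
            · rw [cexp_eq, div_mul_eq_mul_div, eq_comm, eq_div_iff hc.ne']
              linarith [key1]
            · rw [Finset.sum_mul]
              exact Finset.sum_congr rfl (fun v _ => key2 v)
    · -- zero case
      have hc0 : pr mu (fun o => M o = m' ∧ A o = a' ∧ X o = x) = 0 :=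
        le_antisymm (not_lt.mp hc) (pr_nonneg mu hmu0 _)
      have hmu' : ∀ o, (M o = m' ∧ A o = a' ∧ X o = x) → mu o = 0 :=
        mu_zero_of_pr_zero mu hmu0 hc0
      have hgz : g m' = 0 := by rw [hgdef]; exact if_neg hc
      have hz1 : pr mu (fun o => M o = m' ∧ Z o = z ∧ A o = a' ∧ X o = x) = 0 :=
        le_antisymm (hc0 ▸ pr_mono mu hmu0 (fun o ho => ⟨ho.1, ho.2.2⟩)) (pr_nonneg mu hmu0 _)
      have hz2 : nsum mu Y (fun o => M o = m' ∧ Z o = z ∧ A o = a' ∧ X o = x) = 0 :=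
        nsum_zero mu Y (fun o ho => hmu' o ⟨ho.1, ho.2.2⟩)
      have hz3 : ∀ v : TW,
          pr mu (fun o => W o = v ∧ M o = m' ∧ Z o = z ∧ A o = a' ∧ X o = x) = 0 :=
        fun v => le_antisymm
          (hc0 ▸ pr_mono mu hmu0 (fun o ho => ⟨ho.2.1, ho.2.2.2⟩)) (pr_nonneg mu hmu0 _)
      rw [hgz, hz1, hz2]
      simp [hz3]
  -- the completeness hypothesis applies
  have hg : ∀ z : TZ, cexp mu (fun o => g (M o)) (fun o => Z o = z ∧ A o = a' ∧ X o = x) = 0 := by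
    intro z
    by_cases hP : pr mu (fun o => Z o = z ∧ A o = a' ∧ X o = x) = 0
    · exact cexp_of_pr_zero mu hmu0 _ hP
    have hnum : nsum mu (fun o => g (M o)) (fun o => Z o = z ∧ A o = a' ∧ X o = x) = 0 := by
      rw [← partition mu M (fun o => Z o = z ∧ A o = a' ∧ X o = x) (fun o => g (M o))]
      have step1 : (Finset.univ.sum fun m' : TM =>
          nsum mu (fun o => g (M o)) (fun o => M o = m' ∧ (Z o = z ∧ A o = a' ∧ X o = x))) =
          Finset.univ.sum fun m' : TM =>
            g m' * pr mu (fun o => M o = m' ∧ Z o = z ∧ A o = a' ∧ X o = x) :=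
        Finset.sum_congr rfl (fun m' _ =>
          (mul_pr mu M (fun o => Z o = z ∧ A o = a' ∧ X o = x) g m').symm)
      rw [step1, Finset.sum_congr rfl (fun m' _ => hterm z m'), Finset.sum_sub_distrib]
      have s1 : (Finset.univ.sum fun m' : TM =>
          nsum mu Y (fun o => M o = m' ∧ Z o = z ∧ A o = a' ∧ X o = x)) =
          nsum mu Y (fun o => Z o = z ∧ A o = a' ∧ X o = x) :=
        partition mu M (fun o => Z o = z ∧ A o = a' ∧ X o = x) Y
      have s2 : (Finset.univ.sum fun m' : TM => Finset.univ.sum fun v : TW =>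
          h v a' x * pr mu (fun o => W o = v ∧ M o = m' ∧ Z o = z ∧ A o = a' ∧ X o = x)) =
          nsum mu (fun o => h (W o) a' x) (fun o => Z o = z ∧ A o = a' ∧ X o = x) := by
        rw [Finset.sum_comm]
        have s2a : ∀ v : TW, (Finset.univ.sum fun m' : TM =>
            h v a' x * pr mu (fun o => W o = v ∧ M o = m' ∧ Z o = z ∧ A o = a' ∧ X o = x)) =
            h v a' x * pr mu (fun o => W o = v ∧ (Z o = z ∧ A o = a' ∧ X o = x)) := by
          intro v
          rw [← Finset.mul_sum]
          congr 1
          have e7 : (Finset.univ.sum fun m' : TM =>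
              pr mu (fun o => W o = v ∧ M o = m' ∧ Z o = z ∧ A o = a' ∧ X o = x)) =
              Finset.univ.sum fun m' : TM =>
                pr mu (fun o => M o = m' ∧ (W o = v ∧ Z o = z ∧ A o = a' ∧ X o = x)) :=
            Finset.sum_congr rfl (fun m' _ => pr_congr mu (fun o => by tauto))
          rw [e7, pr_partition mu M (fun o => W o = v ∧ Z o = z ∧ A o = a' ∧ X o = x)]
        rw [Finset.sum_congr rfl (fun v _ => s2a v),
          Finset.sum_congr rfl (fun v _ =>
            mul_pr mu W (fun o => Z o = z ∧ A o = a' ∧ X o = x) (fun v => h v a' x) v),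
          partition mu W (fun o => Z o = z ∧ A o = a' ∧ X o = x) (fun o => h (W o) a' x)]
      rw [s1, s2]
      have hb := hbridge z x
      rw [cexp_eq, cexp_eq, div_eq_div_iff hP hP] at hb
      have := mul_right_cancel₀ hP hb
      linarith
    rw [cexp_eq, hnum, zero_div]
  have hgm := hcomp g a' x hg m hpos
  have hgm2 : cexp mu Y (fun o => M o = m ∧ A o = a' ∧ X o = x) -
      Finset.univ.sum (fun v : TW =>
        h v a' x * cpr mu (fun o => W o = v) (fun o => M o = m ∧ X o = x)) = 0 := by
    rw [hgdef] at hgm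
    simp only at hgm
    rwa [if_pos hpos] at hgm
  linarith
end
end

section
/- Let all variables be discrete. Suppose Y ⊥ Z | (A,M,X), W ⊥ (A,Z) | (M,X), the completeness condition that E[g(M)|Z,a,x]=0 a.s. implies g(M)=0 a.s. for all a,x, and that h solves E[Y | Z,A,X] = E[h(W,A,X) | Z,A,X]. Then Σ_{y,m,x} y· p(y | m, a', x)· p(m | a, x)· p(x) = Σ_{w,x} h(w,a',x)· p(w | a, x)· p(x). -/
open Finset
open scoped Classical

noncomputable section

namespace StmtAux

variable {O : Type} [Fintype O]

def Sm (mu : O -> Real) (f : O -> Real) (t : O -> Prop) : Real :=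
  Finset.univ.sum (fun w => if t w then f w * mu w else 0)

lemma pr_congr (mu : O -> Real) {s t : O -> Prop} (h : ∀ o, s o ↔ t o) :
    pr mu s = pr mu t := by
  have hst : s = t := funext fun o => propext (h o)
  rw [hst]

lemma Sm_congr (mu f : O -> Real) {s t : O -> Prop} (h : ∀ o, s o ↔ t o) :
    Sm mu f s = Sm mu f t := by
  have hst : s = t := funext fun o => propext (h o)
  rw [hst]

lemma pr_nonneg (mu : O -> Real) (hmu0 : ∀ o, 0 ≤ mu o) (t : O -> Prop) : 0 ≤ pr mu t :=
  Finset.sum_nonneg fun o _ => by by_cases h : t o <;> simp [pr, h, hmu0 o]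

lemma pr_mono (mu : O -> Real) (hmu0 : ∀ o, 0 ≤ mu o) {s t : O -> Prop}
    (h : ∀ o, s o → t o) : pr mu s ≤ pr mu t :=
  Finset.sum_le_sum fun o _ => by
    by_cases hs : s o
    · simp [hs, h o hs]
    · by_cases ht : t o <;> simp [hs, ht, hmu0 o]

lemma Sm_zero (mu : O -> Real) (hmu0 : ∀ o, 0 ≤ mu o) (f : O -> Real) {t : O -> Prop}
    (h : pr mu t = 0) : Sm mu f t = 0 := by
  have key : ∀ o, t o → mu o = 0 := by
    intro o ho
    have h2 := (Finset.sum_eq_zero_iff_of_nonneg (fun o _ => by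
      by_cases h3 : t o <;> simp [h3, hmu0 o])).mp h o (Finset.mem_univ o)
    simpa [ho] using h2
  refine Finset.sum_eq_zero fun o _ => ?_
  by_cases ho : t o
  · simp [ho, key o ho]
  · simp [ho]

lemma Sm_fiber {TV : Type} [Fintype TV] (mu : O -> Real) (V : O -> TV) (f : O -> Real)
    (E : O -> Prop) :
    (∑ v : TV, Sm mu f (fun o => V o = v ∧ E o)) = Sm mu f E := by
  unfold Sm
  rw [Finset.sum_comm]
  refine Finset.sum_congr rfl fun o _ => ?_
  by_cases hE : E o <;> simp [hE]

lemma pr_fiber {TV : Type} [Fintype TV] (mu : O -> Real) (V : O -> TV) (E : O -> Prop) :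
    (∑ v : TV, pr mu (fun o => V o = v ∧ E o)) = pr mu E := by
  unfold pr
  rw [Finset.sum_comm]
  refine Finset.sum_congr rfl fun o _ => ?_
  by_cases hE : E o <;> simp [hE]

lemma sum_pr_fiber {TV : Type} [Fintype TV] (mu : O -> Real) (V : O -> TV) (F : TV -> Real)
    (E : O -> Prop) :
    (∑ v : TV, F v * pr mu (fun o => V o = v ∧ E o)) = Sm mu (fun o => F (V o)) E := by
  unfold pr Sm
  simp_rw [Finset.mul_sum]
  rw [Finset.sum_comm]
  refine Finset.sum_congr rfl fun o _ => ?_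
  by_cases hE : E o <;> simp [hE, mul_ite]

lemma sum_image_pr (mu : O -> Real) (Y : O -> Real) (E : O -> Prop) :
    (∑ y ∈ Finset.image Y Finset.univ, y * pr mu (fun o => Y o = y ∧ E o)) = Sm mu Y E := by
  unfold pr Sm
  simp_rw [Finset.mul_sum]
  rw [Finset.sum_comm]
  refine Finset.sum_congr rfl fun o _ => ?_
  by_cases hE : E o
  · simp [hE, mul_ite, Finset.sum_ite_eq, Finset.mem_image_of_mem]
  · simp [hE]

end StmtAux

theorem stmt1
    {O TA TM TZ TW TX : Type}
    [Fintype O] [Fintype TA] [Fintype TM] [Fintype TZ] [Fintype TW] [Fintype TX]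
    [DecidableEq TA] [DecidableEq TM] [DecidableEq TZ] [DecidableEq TW] [DecidableEq TX]
    (mu : O -> Real) (hmu0 : forall o : O, 0 <= mu o)
    (hmu1 : Finset.univ.sum mu = 1)
    (A : O -> TA) (Y : O -> Real) (M : O -> TM) (Z : O -> TZ) (W : O -> TW) (X : O -> TX)
    (a a' : TA) (h : TW -> TA -> TX -> Real)
    (hYZ : forall (y : Real) (z : TZ) (t : TA) (m : TM) (x : TX),
      pr mu (fun o => Y o = y /\ Z o = z /\ A o = t /\ M o = m /\ X o = x) *
        pr mu (fun o => A o = t /\ M o = m /\ X o = x) =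
      pr mu (fun o => Y o = y /\ A o = t /\ M o = m /\ X o = x) *
        pr mu (fun o => Z o = z /\ A o = t /\ M o = m /\ X o = x))
    (hWA : forall (v : TW) (t : TA) (z : TZ) (m : TM) (x : TX),
      pr mu (fun o => W o = v /\ A o = t /\ Z o = z /\ M o = m /\ X o = x) *
        pr mu (fun o => M o = m /\ X o = x) =
      pr mu (fun o => W o = v /\ M o = m /\ X o = x) *
        pr mu (fun o => A o = t /\ Z o = z /\ M o = m /\ X o = x))
    (hcomp : forall (g : TM -> Real) (t : TA) (x : TX),
      (forall z : TZ, cexp mu (fun o => g (M o)) (fun o => Z o = z /\ A o = t /\ X o = x) = 0) ->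
      forall m : TM, 0 < pr mu (fun o => M o = m /\ A o = t /\ X o = x) -> g m = 0)
    (hpos : forall (m : TM) (t : TA) (x : TX), 0 < pr mu (fun o => X o = x) ->
      0 < pr mu (fun o => M o = m /\ A o = t /\ X o = x))
    (hbridge : forall (z : TZ) (t : TA) (x : TX),
      0 < pr mu (fun o => Z o = z /\ A o = t /\ X o = x) ->
      cexp mu Y (fun o => Z o = z /\ A o = t /\ X o = x) =
      cexp mu (fun o => h (W o) t x) (fun o => Z o = z /\ A o = t /\ X o = x))
 :
    Finset.univ.sum (fun x : TX =>
      (Finset.univ.sum (fun m : TM =>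
        cexp mu Y (fun o => M o = m /\ A o = a' /\ X o = x) *
          cpr mu (fun o => M o = m) (fun o => A o = a /\ X o = x))) *
        pr mu (fun o => X o = x)) =
    Finset.univ.sum (fun x : TX =>
      (Finset.univ.sum (fun v : TW =>
        h v a' x * cpr mu (fun o => W o = v) (fun o => A o = a /\ X o = x))) *
        pr mu (fun o => X o = x)) := by
  refine Finset.sum_congr rfl fun x _ => ?_
  beta_reduce
  by_cases hx : pr mu (fun o => X o = x) = 0
  · rw [hx, mul_zero, mul_zero]
  have hx' : 0 < pr mu (fun o => X o = x) :=
    lt_of_le_of_ne (StmtAux.pr_nonneg mu hmu0 _) (Ne.symm hx)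
  have hMAX : ∀ (m : TM) (t : TA), 0 < pr mu (fun o => M o = m ∧ A o = t ∧ X o = x) :=
    fun m t => hpos m t x hx'
  have hMX : ∀ m : TM, 0 < pr mu (fun o => M o = m ∧ X o = x) := fun m =>
    lt_of_lt_of_le (hMAX m a') (StmtAux.pr_mono mu hmu0 fun o ho => ⟨ho.1, ho.2.2⟩)
  have hO : Nonempty O := by
    by_contra hO
    rw [not_nonempty_iff] at hO
    exact hx (by simp [pr, Finset.univ_eq_empty])
  obtain ⟨o0⟩ := hO
  have hAX : 0 < pr mu (fun o => A o = a ∧ X o = x) :=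
    lt_of_lt_of_le (hMAX (M o0) a) (StmtAux.pr_mono mu hmu0 fun o ho => ho.2)
  congr 1
  -- C1 : S-form of hYZ
  have C1 : ∀ (z : TZ) (t : TA) (m : TM),
      StmtAux.Sm mu Y (fun o => Z o = z ∧ A o = t ∧ M o = m ∧ X o = x) *
        pr mu (fun o => A o = t ∧ M o = m ∧ X o = x) =
      StmtAux.Sm mu Y (fun o => A o = t ∧ M o = m ∧ X o = x) *
        pr mu (fun o => Z o = z ∧ A o = t ∧ M o = m ∧ X o = x) := by
    intro z t m
    have e1 : StmtAux.Sm mu Y (fun o => Z o = z ∧ A o = t ∧ M o = m ∧ X o = x) =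
        ∑ y ∈ Finset.image Y Finset.univ,
          y * pr mu (fun o => Y o = y ∧ Z o = z ∧ A o = t ∧ M o = m ∧ X o = x) :=
      (StmtAux.sum_image_pr mu Y _).symm
    have e2 : StmtAux.Sm mu Y (fun o => A o = t ∧ M o = m ∧ X o = x) =
        ∑ y ∈ Finset.image Y Finset.univ,
          y * pr mu (fun o => Y o = y ∧ A o = t ∧ M o = m ∧ X o = x) :=
      (StmtAux.sum_image_pr mu Y _).symm
    rw [e1, e2, Finset.sum_mul, Finset.sum_mul]
    refine Finset.sum_congr rfl fun y _ => ?_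
    rw [mul_assoc, mul_assoc]
    congr 1
    exact hYZ y z t m x
  -- C2 : S-form of hWA
  have C2 : ∀ (t : TA) (z : TZ) (m : TM),
      StmtAux.Sm mu (fun o => h (W o) a' x) (fun o => A o = t ∧ Z o = z ∧ M o = m ∧ X o = x) *
        pr mu (fun o => M o = m ∧ X o = x) =
      StmtAux.Sm mu (fun o => h (W o) a' x) (fun o => M o = m ∧ X o = x) *
        pr mu (fun o => A o = t ∧ Z o = z ∧ M o = m ∧ X o = x) := by
    intro t z m
    have e1 : StmtAux.Sm mu (fun o => h (W o) a' x)
          (fun o => A o = t ∧ Z o = z ∧ M o = m ∧ X o = x) =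
        ∑ v : TW, h v a' x *
          pr mu (fun o => W o = v ∧ A o = t ∧ Z o = z ∧ M o = m ∧ X o = x) :=
      (StmtAux.sum_pr_fiber mu W (fun v => h v a' x) _).symm
    have e2 : StmtAux.Sm mu (fun o => h (W o) a' x) (fun o => M o = m ∧ X o = x) =
        ∑ v : TW, h v a' x * pr mu (fun o => W o = v ∧ M o = m ∧ X o = x) :=
      (StmtAux.sum_pr_fiber mu W (fun v => h v a' x) _).symm
    rw [e1, e2, Finset.sum_mul, Finset.sum_mul]
    refine Finset.sum_congr rfl fun v _ => ?_
    rw [mul_assoc, mul_assoc]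
    congr 1
    exact hWA v t z m x
  -- C3 : bridge in S-form
  have C3 : ∀ z : TZ,
      StmtAux.Sm mu Y (fun o => Z o = z ∧ A o = a' ∧ X o = x) =
      StmtAux.Sm mu (fun o => h (W o) a' x) (fun o => Z o = z ∧ A o = a' ∧ X o = x) := by
    intro z
    by_cases hz : pr mu (fun o => Z o = z ∧ A o = a' ∧ X o = x) = 0
    · rw [StmtAux.Sm_zero mu hmu0 Y hz, StmtAux.Sm_zero mu hmu0 _ hz]
    · have hz' : 0 < pr mu (fun o => Z o = z ∧ A o = a' ∧ X o = x) :=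
        lt_of_le_of_ne (StmtAux.pr_nonneg mu hmu0 _) (Ne.symm hz)
      have hb : StmtAux.Sm mu Y (fun o => Z o = z ∧ A o = a' ∧ X o = x) /
            pr mu (fun o => Z o = z ∧ A o = a' ∧ X o = x) =
          StmtAux.Sm mu (fun o => h (W o) a' x) (fun o => Z o = z ∧ A o = a' ∧ X o = x) /
            pr mu (fun o => Z o = z ∧ A o = a' ∧ X o = x) := hbridge z a' x hz'
      rw [div_eq_div_iff hz hz] at hb
      exact mul_right_cancel₀ hz hb
  -- key : identification of the inner conditional expectation
  have key : ∀ m : TM,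
      cexp mu Y (fun o => M o = m ∧ A o = a' ∧ X o = x) =
      StmtAux.Sm mu (fun o => h (W o) a' x) (fun o => M o = m ∧ X o = x) /
        pr mu (fun o => M o = m ∧ X o = x) := by
    have hcz : ∀ z : TZ,
        cexp mu (fun o =>
          cexp mu Y (fun o' => M o' = M o ∧ A o' = a' ∧ X o' = x) -
            StmtAux.Sm mu (fun o' => h (W o') a' x) (fun o' => M o' = M o ∧ X o' = x) /
              pr mu (fun o' => M o' = M o ∧ X o' = x))
          (fun o => Z o = z ∧ A o = a' ∧ X o = x) = 0 := by
      intro z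
      have hqP : ∀ m' : TM,
          cexp mu Y (fun o => M o = m' ∧ A o = a' ∧ X o = x) *
            pr mu (fun o => M o = m' ∧ Z o = z ∧ A o = a' ∧ X o = x) =
          StmtAux.Sm mu Y (fun o => M o = m' ∧ Z o = z ∧ A o = a' ∧ X o = x) := by
        intro m'
        show StmtAux.Sm mu Y (fun o => M o = m' ∧ A o = a' ∧ X o = x) /
            pr mu (fun o => M o = m' ∧ A o = a' ∧ X o = x) *
            pr mu (fun o => M o = m' ∧ Z o = z ∧ A o = a' ∧ X o = x) = _
        rw [div_mul_eq_mul_div, div_eq_iff (hMAX m' a').ne']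
        have r1 : StmtAux.Sm mu Y (fun o => Z o = z ∧ A o = a' ∧ M o = m' ∧ X o = x) =
            StmtAux.Sm mu Y (fun o => M o = m' ∧ Z o = z ∧ A o = a' ∧ X o = x) :=
          StmtAux.Sm_congr mu Y fun o => by tauto
        have r2 : pr mu (fun o => A o = a' ∧ M o = m' ∧ X o = x) =
            pr mu (fun o => M o = m' ∧ A o = a' ∧ X o = x) :=
          StmtAux.pr_congr mu fun o => by tauto
        have r3 : StmtAux.Sm mu Y (fun o => A o = a' ∧ M o = m' ∧ X o = x) =
            StmtAux.Sm mu Y (fun o => M o = m' ∧ A o = a' ∧ X o = x) :=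
          StmtAux.Sm_congr mu Y fun o => by tauto
        have r4 : pr mu (fun o => Z o = z ∧ A o = a' ∧ M o = m' ∧ X o = x) =
            pr mu (fun o => M o = m' ∧ Z o = z ∧ A o = a' ∧ X o = x) :=
          StmtAux.pr_congr mu fun o => by tauto
        have c := C1 z a' m'
        rw [r1, r2, r3, r4] at c
        exact c.symm
      have hrP : ∀ m' : TM,
          StmtAux.Sm mu (fun o => h (W o) a' x) (fun o => M o = m' ∧ X o = x) /
              pr mu (fun o => M o = m' ∧ X o = x) *
            pr mu (fun o => M o = m' ∧ Z o = z ∧ A o = a' ∧ X o = x) =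
          StmtAux.Sm mu (fun o => h (W o) a' x)
            (fun o => M o = m' ∧ Z o = z ∧ A o = a' ∧ X o = x) := by
        intro m'
        rw [div_mul_eq_mul_div, div_eq_iff (hMX m').ne']
        have r1 : StmtAux.Sm mu (fun o => h (W o) a' x)
              (fun o => A o = a' ∧ Z o = z ∧ M o = m' ∧ X o = x) =
            StmtAux.Sm mu (fun o => h (W o) a' x)
              (fun o => M o = m' ∧ Z o = z ∧ A o = a' ∧ X o = x) :=
          StmtAux.Sm_congr mu _ fun o => by tauto
        have r2 : pr mu (fun o => A o = a' ∧ Z o = z ∧ M o = m' ∧ X o = x) =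
            pr mu (fun o => M o = m' ∧ Z o = z ∧ A o = a' ∧ X o = x) :=
          StmtAux.pr_congr mu fun o => by tauto
        have c := C2 a' z m'
        rw [r1, r2] at c
        exact c.symm
      have hnum : StmtAux.Sm mu (fun o =>
          cexp mu Y (fun o' => M o' = M o ∧ A o' = a' ∧ X o' = x) -
            StmtAux.Sm mu (fun o' => h (W o') a' x) (fun o' => M o' = M o ∧ X o' = x) /
              pr mu (fun o' => M o' = M o ∧ X o' = x))
          (fun o => Z o = z ∧ A o = a' ∧ X o = x) = 0 := by
        have e : StmtAux.Sm mu (fun o =>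
            cexp mu Y (fun o' => M o' = M o ∧ A o' = a' ∧ X o' = x) -
              StmtAux.Sm mu (fun o' => h (W o') a' x) (fun o' => M o' = M o ∧ X o' = x) /
                pr mu (fun o' => M o' = M o ∧ X o' = x))
            (fun o => Z o = z ∧ A o = a' ∧ X o = x) =
            ∑ m' : TM, (cexp mu Y (fun o => M o = m' ∧ A o = a' ∧ X o = x) -
              StmtAux.Sm mu (fun o => h (W o) a' x) (fun o => M o = m' ∧ X o = x) /
                pr mu (fun o => M o = m' ∧ X o = x)) *
              pr mu (fun o => M o = m' ∧ Z o = z ∧ A o = a' ∧ X o = x) :=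
          (StmtAux.sum_pr_fiber mu M
            (fun m' => cexp mu Y (fun o => M o = m' ∧ A o = a' ∧ X o = x) -
              StmtAux.Sm mu (fun o => h (W o) a' x) (fun o => M o = m' ∧ X o = x) /
                pr mu (fun o => M o = m' ∧ X o = x)) _).symm
        rw [e]
        have e2 : ∀ m' : TM,
            (cexp mu Y (fun o => M o = m' ∧ A o = a' ∧ X o = x) -
              StmtAux.Sm mu (fun o => h (W o) a' x) (fun o => M o = m' ∧ X o = x) /
                pr mu (fun o => M o = m' ∧ X o = x)) *
              pr mu (fun o => M o = m' ∧ Z o = z ∧ A o = a' ∧ X o = x) =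
            StmtAux.Sm mu Y (fun o => M o = m' ∧ Z o = z ∧ A o = a' ∧ X o = x) -
              StmtAux.Sm mu (fun o => h (W o) a' x)
                (fun o => M o = m' ∧ Z o = z ∧ A o = a' ∧ X o = x) := by
          intro m'
          rw [sub_mul, hqP m', hrP m']
        rw [Finset.sum_congr rfl fun m' _ => e2 m', Finset.sum_sub_distrib]
        have fY : (∑ m' : TM,
            StmtAux.Sm mu Y (fun o => M o = m' ∧ Z o = z ∧ A o = a' ∧ X o = x)) =
            StmtAux.Sm mu Y (fun o => Z o = z ∧ A o = a' ∧ X o = x) :=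
          StmtAux.Sm_fiber mu M Y _
        have fh : (∑ m' : TM, StmtAux.Sm mu (fun o => h (W o) a' x)
            (fun o => M o = m' ∧ Z o = z ∧ A o = a' ∧ X o = x)) =
            StmtAux.Sm mu (fun o => h (W o) a' x) (fun o => Z o = z ∧ A o = a' ∧ X o = x) :=
          StmtAux.Sm_fiber mu M _ _
        rw [fY, fh, C3 z, sub_self]
      show StmtAux.Sm mu (fun o =>
          cexp mu Y (fun o' => M o' = M o ∧ A o' = a' ∧ X o' = x) -
            StmtAux.Sm mu (fun o' => h (W o') a' x) (fun o' => M o' = M o ∧ X o' = x) /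
              pr mu (fun o' => M o' = M o ∧ X o' = x))
          (fun o => Z o = z ∧ A o = a' ∧ X o = x) /
        pr mu (fun o => Z o = z ∧ A o = a' ∧ X o = x) = 0
      rw [hnum, zero_div]
    intro m
    have h0 := hcomp (fun m0 => cexp mu Y (fun o => M o = m0 ∧ A o = a' ∧ X o = x) -
        StmtAux.Sm mu (fun o => h (W o) a' x) (fun o => M o = m0 ∧ X o = x) /
          pr mu (fun o => M o = m0 ∧ X o = x)) a' x hcz m (hMAX m a')
    exact sub_eq_zero.mp h0
  -- C2 summed over z
  have hC2s : ∀ m : TM,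
      StmtAux.Sm mu (fun o => h (W o) a' x) (fun o => M o = m ∧ A o = a ∧ X o = x) *
        pr mu (fun o => M o = m ∧ X o = x) =
      StmtAux.Sm mu (fun o => h (W o) a' x) (fun o => M o = m ∧ X o = x) *
        pr mu (fun o => M o = m ∧ A o = a ∧ X o = x) := by
    intro m
    have C2' : ∀ z : TZ,
        StmtAux.Sm mu (fun o => h (W o) a' x) (fun o => Z o = z ∧ M o = m ∧ A o = a ∧ X o = x) *
          pr mu (fun o => M o = m ∧ X o = x) =
        StmtAux.Sm mu (fun o => h (W o) a' x) (fun o => M o = m ∧ X o = x) *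
          pr mu (fun o => Z o = z ∧ M o = m ∧ A o = a ∧ X o = x) := by
      intro z
      have r1 : StmtAux.Sm mu (fun o => h (W o) a' x)
            (fun o => A o = a ∧ Z o = z ∧ M o = m ∧ X o = x) =
          StmtAux.Sm mu (fun o => h (W o) a' x)
            (fun o => Z o = z ∧ M o = m ∧ A o = a ∧ X o = x) :=
        StmtAux.Sm_congr mu _ fun o => by tauto
      have r2 : pr mu (fun o => A o = a ∧ Z o = z ∧ M o = m ∧ X o = x) =
          pr mu (fun o => Z o = z ∧ M o = m ∧ A o = a ∧ X o = x) :=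
        StmtAux.pr_congr mu fun o => by tauto
      have c := C2 a z m
      rw [r1, r2] at c
      exact c
    have fS : (∑ z : TZ, StmtAux.Sm mu (fun o => h (W o) a' x)
        (fun o => Z o = z ∧ M o = m ∧ A o = a ∧ X o = x)) =
        StmtAux.Sm mu (fun o => h (W o) a' x) (fun o => M o = m ∧ A o = a ∧ X o = x) :=
      StmtAux.Sm_fiber mu Z _ _
    have fP : (∑ z : TZ, pr mu (fun o => Z o = z ∧ M o = m ∧ A o = a ∧ X o = x)) =
        pr mu (fun o => M o = m ∧ A o = a ∧ X o = x) := StmtAux.pr_fiber mu Z _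
    calc StmtAux.Sm mu (fun o => h (W o) a' x) (fun o => M o = m ∧ A o = a ∧ X o = x) *
          pr mu (fun o => M o = m ∧ X o = x)
        = (∑ z : TZ, StmtAux.Sm mu (fun o => h (W o) a' x)
            (fun o => Z o = z ∧ M o = m ∧ A o = a ∧ X o = x)) *
            pr mu (fun o => M o = m ∧ X o = x) := by rw [fS]
      _ = ∑ z : TZ, StmtAux.Sm mu (fun o => h (W o) a' x)
            (fun o => Z o = z ∧ M o = m ∧ A o = a ∧ X o = x) *
            pr mu (fun o => M o = m ∧ X o = x) := by rw [Finset.sum_mul]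
      _ = ∑ z : TZ, StmtAux.Sm mu (fun o => h (W o) a' x) (fun o => M o = m ∧ X o = x) *
            pr mu (fun o => Z o = z ∧ M o = m ∧ A o = a ∧ X o = x) :=
          Finset.sum_congr rfl fun z _ => C2' z
      _ = StmtAux.Sm mu (fun o => h (W o) a' x) (fun o => M o = m ∧ X o = x) *
            pr mu (fun o => M o = m ∧ A o = a ∧ X o = x) := by
          rw [← Finset.mul_sum, fP]
  -- final assembly
  have hLm : ∀ m : TM,
      cexp mu Y (fun o => M o = m ∧ A o = a' ∧ X o = x) *
        cpr mu (fun o => M o = m) (fun o => A o = a ∧ X o = x) =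
      StmtAux.Sm mu (fun o => h (W o) a' x) (fun o => M o = m ∧ A o = a ∧ X o = x) /
        pr mu (fun o => A o = a ∧ X o = x) := by
    intro m
    rw [key m]
    show StmtAux.Sm mu (fun o => h (W o) a' x) (fun o => M o = m ∧ X o = x) /
        pr mu (fun o => M o = m ∧ X o = x) *
        (pr mu (fun o => M o = m ∧ A o = a ∧ X o = x) /
          pr mu (fun o => A o = a ∧ X o = x)) = _
    have step : StmtAux.Sm mu (fun o => h (W o) a' x) (fun o => M o = m ∧ X o = x) /
        pr mu (fun o => M o = m ∧ X o = x) *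
        pr mu (fun o => M o = m ∧ A o = a ∧ X o = x) =
        StmtAux.Sm mu (fun o => h (W o) a' x) (fun o => M o = m ∧ A o = a ∧ X o = x) := by
      rw [div_mul_eq_mul_div, div_eq_iff (hMX m).ne']
      exact (hC2s m).symm
    rw [← mul_div_assoc, step]
  have eM : (∑ m : TM, StmtAux.Sm mu (fun o => h (W o) a' x)
      (fun o => M o = m ∧ A o = a ∧ X o = x)) =
      StmtAux.Sm mu (fun o => h (W o) a' x) (fun o => A o = a ∧ X o = x) :=
    StmtAux.Sm_fiber mu M _ _
  have eW : (∑ v : TW, h v a' x * pr mu (fun o => W o = v ∧ A o = a ∧ X o = x)) =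
      StmtAux.Sm mu (fun o => h (W o) a' x) (fun o => A o = a ∧ X o = x) :=
    StmtAux.sum_pr_fiber mu W (fun v => h v a' x) _
  have hRv : ∀ v : TW,
      h v a' x * cpr mu (fun o => W o = v) (fun o => A o = a ∧ X o = x) =
      h v a' x * pr mu (fun o => W o = v ∧ A o = a ∧ X o = x) /
        pr mu (fun o => A o = a ∧ X o = x) := by
    intro v
    show h v a' x * (pr mu (fun o => W o = v ∧ A o = a ∧ X o = x) /
        pr mu (fun o => A o = a ∧ X o = x)) = _
    rw [← mul_div_assoc]
  calc (∑ m : TM, cexp mu Y (fun o => M o = m ∧ A o = a' ∧ X o = x) *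
        cpr mu (fun o => M o = m) (fun o => A o = a ∧ X o = x))
      = ∑ m : TM, StmtAux.Sm mu (fun o => h (W o) a' x)
          (fun o => M o = m ∧ A o = a ∧ X o = x) /
          pr mu (fun o => A o = a ∧ X o = x) := Finset.sum_congr rfl fun m _ => hLm m
    _ = (∑ m : TM, StmtAux.Sm mu (fun o => h (W o) a' x)
          (fun o => M o = m ∧ A o = a ∧ X o = x)) /
          pr mu (fun o => A o = a ∧ X o = x) := by rw [Finset.sum_div]
    _ = StmtAux.Sm mu (fun o => h (W o) a' x) (fun o => A o = a ∧ X o = x) /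
          pr mu (fun o => A o = a ∧ X o = x) := by rw [eM]
    _ = (∑ v : TW, h v a' x * pr mu (fun o => W o = v ∧ A o = a ∧ X o = x)) /
          pr mu (fun o => A o = a ∧ X o = x) := by rw [eW]
    _ = ∑ v : TW, h v a' x * pr mu (fun o => W o = v ∧ A o = a ∧ X o = x) /
          pr mu (fun o => A o = a ∧ X o = x) := by rw [Finset.sum_div]
    _ = ∑ v : TW, h v a' x * cpr mu (fun o => W o = v) (fun o => A o = a ∧ X o = x) :=
        Finset.sum_congr rfl fun v _ => (hRv v).symm

end
end

section
/- Let all variables be discrete. Suppose Y ⊥ Z | (A,M,X), W ⊥ (A,Z) | (M,X), completeness of Z for M given (a,x), and that h solves E[Y | Z,A,X] = E[h(W,A,X) | Z,A,X]. Then Σ_{a',y,m,x} y· p(y | m, a', x)· p(m | a, x)· p(a' | x)· p(x) = Σ_{w,a',x} h(w,a',x)· p(w | a, x)· p(a' | x)· p(x). -/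
open Finset
open scoped Classical

noncomputable section

namespace FD

variable {O : Type} [Fintype O]

def num (mu : O → ℝ) (f : O → ℝ) (s : O → Prop) : ℝ :=
  Finset.univ.sum (fun w => if s w then f w * mu w else 0)

lemma cexp_def (mu : O → ℝ) (f : O → ℝ) (t : O → Prop) :
    cexp mu f t = num mu f t / pr mu t := rfl

lemma pr_congr {mu : O → ℝ} {s t : O → Prop} (h : ∀ o, s o ↔ t o) :
    pr mu s = pr mu t :=
  Finset.sum_congr rfl fun o _ => by simp only [h o]

lemma num_congr {mu f} {s t : O → Prop} (h : ∀ o, s o ↔ t o) :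
    num mu f s = num mu f t :=
  Finset.sum_congr rfl fun o _ => by simp only [h o]

lemma pr_nonneg {mu : O → ℝ} (hmu0 : ∀ o, 0 ≤ mu o) (s : O → Prop) : 0 ≤ pr mu s :=
  Finset.sum_nonneg fun o _ => by split <;> simp [hmu0 o]

lemma mu_zero {mu : O → ℝ} (hmu0 : ∀ o, 0 ≤ mu o) {t : O → Prop}
    (ht : pr mu t = 0) : ∀ o, t o → mu o = 0 := by
  intro o ho
  have h1 : ∀ i ∈ Finset.univ, (0:ℝ) ≤ (fun w => if t w then mu w else 0) i := by
    intro i _; dsimp only []; split <;> simp [hmu0 i]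
  have := (Finset.sum_eq_zero_iff_of_nonneg h1).mp ht o (mem_univ o)
  simpa [ho] using this

lemma pr_zero_mono {mu : O → ℝ} (hmu0 : ∀ o, 0 ≤ mu o) {s t : O → Prop}
    (hst : ∀ o, s o → t o) (ht : pr mu t = 0) : pr mu s = 0 := by
  apply Finset.sum_eq_zero; intro o _
  split
  next h => exact mu_zero hmu0 ht o (hst o h)
  next => rfl

lemma pr_pos_mono {mu : O → ℝ} (hmu0 : ∀ o, 0 ≤ mu o) {s t : O → Prop}
    (hst : ∀ o, s o → t o) (hs : 0 < pr mu s) : 0 < pr mu t := by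
  rcases (pr_nonneg hmu0 t).lt_or_eq with h | h
  · exact h
  · exact absurd (pr_zero_mono hmu0 hst h.symm) (ne_of_gt hs)

lemma num_zero_of_pr_zero {mu : O → ℝ} (hmu0 : ∀ o, 0 ≤ mu o) (f : O → ℝ) {t : O → Prop}
    (ht : pr mu t = 0) : num mu f t = 0 := by
  apply Finset.sum_eq_zero; intro o _
  split
  next h => rw [mu_zero hmu0 ht o h, mul_zero]
  next => rfl

lemma pr_fiber {T : Type} [Fintype T] (mu : O → ℝ) (F : O → T) (s : O → Prop) :
    pr mu s = ∑ m, pr mu (fun o => F o = m ∧ s o) := by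
  unfold pr
  rw [Finset.sum_comm]
  apply Finset.sum_congr rfl; intro o _
  by_cases hs : s o
  · simp [hs, Finset.sum_ite_eq]
  · simp [hs]

lemma num_fiber {T : Type} [Fintype T] (mu : O → ℝ) (f : O → ℝ) (F : O → T) (s : O → Prop) :
    num mu f s = ∑ m, num mu f (fun o => F o = m ∧ s o) := by
  unfold num
  rw [Finset.sum_comm]
  apply Finset.sum_congr rfl; intro o _
  by_cases hs : s o
  · simp [hs, Finset.sum_ite_eq]
  · simp [hs]

lemma num_comp {T : Type} [Fintype T] (mu : O → ℝ) (g : T → ℝ) (F : O → T) (s : O → Prop) :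
    num mu (fun o => g (F o)) s = ∑ v, g v * pr mu (fun o => F o = v ∧ s o) := by
  unfold num pr
  simp_rw [Finset.mul_sum, mul_ite, mul_zero]
  rw [Finset.sum_comm]
  apply Finset.sum_congr rfl; intro o _
  by_cases hs : s o
  · simp [hs, Finset.sum_ite_eq]
  · simp [hs]

lemma num_real (mu : O → ℝ) (Y : O → ℝ) (s : O → Prop) :
    num mu Y s = ∑ y ∈ Finset.image Y Finset.univ, y * pr mu (fun o => Y o = y ∧ s o) := by
  unfold num pr
  simp_rw [Finset.mul_sum, mul_ite, mul_zero]
  rw [Finset.sum_comm]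
  apply Finset.sum_congr rfl; intro o _
  by_cases hs : s o
  · simp only [hs, and_true]
    rw [Finset.sum_ite_eq]
    simp [Finset.mem_image_of_mem]
  · simp [hs]

end FD

open FD

theorem stmt2
    {O TA TM TZ TW TX : Type}
    [Fintype O] [Fintype TA] [Fintype TM] [Fintype TZ] [Fintype TW] [Fintype TX]
    [DecidableEq TA] [DecidableEq TM] [DecidableEq TZ] [DecidableEq TW] [DecidableEq TX]
    (mu : O -> Real) (hmu0 : forall o : O, 0 <= mu o)
    (hmu1 : Finset.univ.sum mu = 1)
    (A : O -> TA) (Y : O -> Real) (M : O -> TM) (Z : O -> TZ) (W : O -> TW) (X : O -> TX)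
    (a : TA) (h : TW -> TA -> TX -> Real)
    (hYZ : forall (y : Real) (z : TZ) (t : TA) (m : TM) (x : TX),
      pr mu (fun o => Y o = y /\ Z o = z /\ A o = t /\ M o = m /\ X o = x) *
        pr mu (fun o => A o = t /\ M o = m /\ X o = x) =
      pr mu (fun o => Y o = y /\ A o = t /\ M o = m /\ X o = x) *
        pr mu (fun o => Z o = z /\ A o = t /\ M o = m /\ X o = x))
    (hWA : forall (v : TW) (t : TA) (z : TZ) (m : TM) (x : TX),
      pr mu (fun o => W o = v /\ A o = t /\ Z o = z /\ M o = m /\ X o = x) *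
        pr mu (fun o => M o = m /\ X o = x) =
      pr mu (fun o => W o = v /\ M o = m /\ X o = x) *
        pr mu (fun o => A o = t /\ Z o = z /\ M o = m /\ X o = x))
    (hcomp : forall (g : TM -> Real) (t : TA) (x : TX),
      (forall z : TZ, cexp mu (fun o => g (M o)) (fun o => Z o = z /\ A o = t /\ X o = x) = 0) ->
      forall m : TM, 0 < pr mu (fun o => M o = m /\ A o = t /\ X o = x) -> g m = 0)
    (hpos : forall (m : TM) (t : TA) (x : TX), 0 < pr mu (fun o => X o = x) ->
      0 < pr mu (fun o => M o = m /\ A o = t /\ X o = x))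
    (hbridge : forall (z : TZ) (t : TA) (x : TX),
      0 < pr mu (fun o => Z o = z /\ A o = t /\ X o = x) ->
      cexp mu Y (fun o => Z o = z /\ A o = t /\ X o = x) =
      cexp mu (fun o => h (W o) t x) (fun o => Z o = z /\ A o = t /\ X o = x))
 :
    Finset.univ.sum (fun x : TX => Finset.univ.sum (fun a' : TA =>
      (Finset.univ.sum (fun m : TM =>
        cexp mu Y (fun o => M o = m /\ A o = a' /\ X o = x) *
          cpr mu (fun o => M o = m) (fun o => A o = a /\ X o = x))) *
        cpr mu (fun o => A o = a') (fun o => X o = x) * pr mu (fun o => X o = x))) =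
    Finset.univ.sum (fun x : TX => Finset.univ.sum (fun a' : TA =>
      (Finset.univ.sum (fun v : TW =>
        h v a' x * cpr mu (fun o => W o = v) (fun o => A o = a /\ X o = x))) *
        cpr mu (fun o => A o = a') (fun o => X o = x) * pr mu (fun o => X o = x))) := by
  apply Finset.sum_congr rfl; intro x _
  apply Finset.sum_congr rfl; intro t _
  by_cases hx : pr mu (fun o => X o = x) = 0
  · rw [hx, mul_zero, mul_zero]
  have hx' : 0 < pr mu (fun o => X o = x) := (pr_nonneg hmu0 _).lt_of_ne (Ne.symm hx)
  -- h composed with W, using treatment value t and covariate x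
  set hW : O → ℝ := fun o => h (W o) t x with hWdef
  -- positivity facts
  have hMAX : ∀ (m : TM) (t' : TA), 0 < pr mu (fun o => M o = m ∧ A o = t' ∧ X o = x) :=
    fun m t' => hpos m t' x hx'
  have hAMX : ∀ (m : TM) (t' : TA), 0 < pr mu (fun o => A o = t' ∧ M o = m ∧ X o = x) := by
    intro m t'
    rw [pr_congr (show ∀ o, (A o = t' ∧ M o = m ∧ X o = x) ↔ (M o = m ∧ A o = t' ∧ X o = x)
      from fun o => by tauto)]
    exact hMAX m t'
  have hMX : ∀ (m : TM), 0 < pr mu (fun o => M o = m ∧ X o = x) := by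
    intro m
    exact pr_pos_mono hmu0 (fun o ho => ⟨ho.1, ho.2.2⟩) (hMAX m t)
  -- key step-1 sub-lemma : L1
  have L1 : ∀ (z : TZ) (m : TM),
      num mu Y (fun o => Z o = z ∧ A o = t ∧ M o = m ∧ X o = x) *
        pr mu (fun o => A o = t ∧ M o = m ∧ X o = x) =
      num mu Y (fun o => A o = t ∧ M o = m ∧ X o = x) *
        pr mu (fun o => Z o = z ∧ A o = t ∧ M o = m ∧ X o = x) := by
    intro z m
    rw [num_real mu Y, num_real mu Y, Finset.sum_mul, Finset.sum_mul]
    apply Finset.sum_congr rfl; intro y _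
    rw [mul_assoc, mul_assoc, hYZ y z t m x]
  -- L2z : for any treatment value t' in the conditioning event
  have L2z : ∀ (t' : TA) (z : TZ) (m : TM),
      num mu hW (fun o => A o = t' ∧ Z o = z ∧ M o = m ∧ X o = x) *
        pr mu (fun o => M o = m ∧ X o = x) =
      num mu hW (fun o => M o = m ∧ X o = x) *
        pr mu (fun o => A o = t' ∧ Z o = z ∧ M o = m ∧ X o = x) := by
    intro t' z m
    rw [hWdef]
    rw [num_comp mu (fun v => h v t x) W, num_comp mu (fun v => h v t x) W,
      Finset.sum_mul, Finset.sum_mul]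
    apply Finset.sum_congr rfl; intro v _
    rw [mul_assoc, mul_assoc, hWA v t' z m x]
  -- Lsum : L2z summed over z
  have Lsum : ∀ (t' : TA) (m : TM),
      num mu hW (fun o => A o = t' ∧ M o = m ∧ X o = x) *
        pr mu (fun o => M o = m ∧ X o = x) =
      num mu hW (fun o => M o = m ∧ X o = x) *
        pr mu (fun o => A o = t' ∧ M o = m ∧ X o = x) := by
    intro t' m
    have e1 : num mu hW (fun o => A o = t' ∧ M o = m ∧ X o = x) =
        ∑ z, num mu hW (fun o => A o = t' ∧ Z o = z ∧ M o = m ∧ X o = x) := by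
      rw [num_fiber mu hW Z (fun o => A o = t' ∧ M o = m ∧ X o = x)]
      exact Finset.sum_congr rfl fun z _ => num_congr (fun o => by tauto)
    have e2 : pr mu (fun o => A o = t' ∧ M o = m ∧ X o = x) =
        ∑ z, pr mu (fun o => A o = t' ∧ Z o = z ∧ M o = m ∧ X o = x) := by
      rw [pr_fiber mu Z (fun o => A o = t' ∧ M o = m ∧ X o = x)]
      exact Finset.sum_congr rfl fun z _ => pr_congr (fun o => by tauto)
    rw [e1, e2, Finset.sum_mul, Finset.mul_sum]
    exact Finset.sum_congr rfl fun z _ => L2z t' z m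
  -- Step 1 : key identity
  have key : ∀ m : TM,
      cexp mu Y (fun o => M o = m ∧ A o = t ∧ X o = x) =
      cexp mu hW (fun o => M o = m ∧ X o = x) := by
    intro m
    have hg := hcomp (fun m => cexp mu Y (fun o => M o = m ∧ A o = t ∧ X o = x) -
        cexp mu hW (fun o => M o = m ∧ X o = x)) t x ?_ m (hMAX m t)
    · have hg' : cexp mu Y (fun o => M o = m ∧ A o = t ∧ X o = x) -
          cexp mu hW (fun o => M o = m ∧ X o = x) = 0 := hg
      linarith
    intro z
    rw [cexp_def]
    suffices hnum : num mu (fun o => (fun m => cexp mu Y (fun o => M o = m ∧ A o = t ∧ X o = x) -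
        cexp mu hW (fun o => M o = m ∧ X o = x)) (M o))
        (fun o => Z o = z ∧ A o = t ∧ X o = x) = 0 by
      rw [hnum, zero_div]
    rw [num_comp mu (fun m => cexp mu Y (fun o => M o = m ∧ A o = t ∧ X o = x) -
        cexp mu hW (fun o => M o = m ∧ X o = x)) M]
    by_cases hz : pr mu (fun o => Z o = z ∧ A o = t ∧ X o = x) = 0
    · apply Finset.sum_eq_zero; intro m _
      rw [pr_zero_mono hmu0 (fun o ho => ho.2) hz, mul_zero]
    have hz' : 0 < pr mu (fun o => Z o = z ∧ A o = t ∧ X o = x) :=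
      (pr_nonneg hmu0 _).lt_of_ne (Ne.symm hz)
    have hb := hbridge z t x hz'
    rw [cexp_def, cexp_def] at hb
    have hbnum : num mu Y (fun o => Z o = z ∧ A o = t ∧ X o = x) =
        num mu hW (fun o => Z o = z ∧ A o = t ∧ X o = x) := by
      field_simp [hz] at hb
      exact hb
    -- expand num Y over M
    have e1 : num mu Y (fun o => Z o = z ∧ A o = t ∧ X o = x) =
        ∑ m, cexp mu Y (fun o => M o = m ∧ A o = t ∧ X o = x) *
          pr mu (fun o => M o = m ∧ Z o = z ∧ A o = t ∧ X o = x) := by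
      rw [num_fiber mu Y M (fun o => Z o = z ∧ A o = t ∧ X o = x)]
      apply Finset.sum_congr rfl; intro m _
      have hc1 : num mu Y (fun o => M o = m ∧ Z o = z ∧ A o = t ∧ X o = x) =
          num mu Y (fun o => Z o = z ∧ A o = t ∧ M o = m ∧ X o = x) :=
        num_congr (fun o => by tauto)
      have hc2 : num mu Y (fun o => M o = m ∧ A o = t ∧ X o = x) =
          num mu Y (fun o => A o = t ∧ M o = m ∧ X o = x) :=
        num_congr (fun o => by tauto)
      have hc3 : pr mu (fun o => M o = m ∧ A o = t ∧ X o = x) =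
          pr mu (fun o => A o = t ∧ M o = m ∧ X o = x) :=
        pr_congr (fun o => by tauto)
      have hc4 : pr mu (fun o => M o = m ∧ Z o = z ∧ A o = t ∧ X o = x) =
          pr mu (fun o => Z o = z ∧ A o = t ∧ M o = m ∧ X o = x) :=
        pr_congr (fun o => by tauto)
      rw [cexp_def, hc1, hc2, hc3, hc4]
      have hp := hAMX m t
      rw [← hc3] at hp
      rw [hc3] at hp
      have hL1 := L1 z m
      field_simp
      linarith [hL1]
    have e2 : num mu hW (fun o => Z o = z ∧ A o = t ∧ X o = x) =
        ∑ m, cexp mu hW (fun o => M o = m ∧ X o = x) *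
          pr mu (fun o => M o = m ∧ Z o = z ∧ A o = t ∧ X o = x) := by
      rw [num_fiber mu hW M (fun o => Z o = z ∧ A o = t ∧ X o = x)]
      apply Finset.sum_congr rfl; intro m _
      have hc1 : num mu hW (fun o => M o = m ∧ Z o = z ∧ A o = t ∧ X o = x) =
          num mu hW (fun o => A o = t ∧ Z o = z ∧ M o = m ∧ X o = x) :=
        num_congr (fun o => by tauto)
      have hc4 : pr mu (fun o => M o = m ∧ Z o = z ∧ A o = t ∧ X o = x) =
          pr mu (fun o => A o = t ∧ Z o = z ∧ M o = m ∧ X o = x) :=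
        pr_congr (fun o => by tauto)
      rw [cexp_def, hc1, hc4]
      have hL2 := L2z t z m
      have hp := hMX m
      field_simp
      linarith [hL2]
    calc ∑ m, (cexp mu Y (fun o => M o = m ∧ A o = t ∧ X o = x) -
            cexp mu hW (fun o => M o = m ∧ X o = x)) *
          pr mu (fun o => M o = m ∧ (Z o = z ∧ A o = t ∧ X o = x))
        = (∑ m, cexp mu Y (fun o => M o = m ∧ A o = t ∧ X o = x) *
            pr mu (fun o => M o = m ∧ Z o = z ∧ A o = t ∧ X o = x)) -
          (∑ m, cexp mu hW (fun o => M o = m ∧ X o = x) *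
            pr mu (fun o => M o = m ∧ Z o = z ∧ A o = t ∧ X o = x)) := by
          rw [← Finset.sum_sub_distrib]
          apply Finset.sum_congr rfl; intro m _
          rw [sub_mul]
      _ = 0 := by rw [← e1, ← e2, hbnum, sub_self]
  -- Step 2 : conclude
  congr 2
  -- nonemptiness → positivity of pr (A = a ∧ X = x)
  obtain ⟨o0, _, _⟩ := Finset.exists_ne_zero_of_sum_ne_zero (hx : pr mu (fun o => X o = x) ≠ 0)
  have hAaX : 0 < pr mu (fun o => A o = a ∧ X o = x) :=
    pr_pos_mono hmu0 (fun o ho => ⟨ho.2.1, ho.2.2⟩) (hMAX (M o0) a)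
  -- rewrite LHS using key
  have lhs_eq : ∀ m : TM,
      cexp mu Y (fun o => M o = m ∧ A o = t ∧ X o = x) *
        cpr mu (fun o => M o = m) (fun o => A o = a ∧ X o = x) =
      cexp mu hW (fun o => M o = m ∧ X o = x) *
        pr mu (fun o => M o = m ∧ (A o = a ∧ X o = x)) / pr mu (fun o => A o = a ∧ X o = x) := by
    intro m
    rw [key m]
    unfold cpr
    ring
  -- RHS as a single num
  have rhs_eq : (∑ v, h v t x * cpr mu (fun o => W o = v) (fun o => A o = a ∧ X o = x)) =
      num mu hW (fun o => A o = a ∧ X o = x) / pr mu (fun o => A o = a ∧ X o = x) := by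
    unfold cpr
    rw [hWdef, num_comp mu (fun v => h v t x) W, Finset.sum_div]
    apply Finset.sum_congr rfl; intro v _
    rw [mul_div_assoc]
  rw [rhs_eq]
  have expand : num mu hW (fun o => A o = a ∧ X o = x) =
      ∑ m, cexp mu hW (fun o => M o = m ∧ X o = x) *
        pr mu (fun o => M o = m ∧ (A o = a ∧ X o = x)) := by
    rw [num_fiber mu hW M (fun o => A o = a ∧ X o = x)]
    apply Finset.sum_congr rfl; intro m _
    have hc1 : num mu hW (fun o => M o = m ∧ (A o = a ∧ X o = x)) =
        num mu hW (fun o => A o = a ∧ M o = m ∧ X o = x) :=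
      num_congr (fun o => by tauto)
    have hc2 : pr mu (fun o => M o = m ∧ (A o = a ∧ X o = x)) =
        pr mu (fun o => A o = a ∧ M o = m ∧ X o = x) :=
      pr_congr (fun o => by tauto)
    rw [cexp_def, hc1, hc2]
    have hL := Lsum a m
    have hp := hMX m
    field_simp
    linarith [hL]
  rw [expand, Finset.sum_div]
  apply Finset.sum_congr rfl; intro m _
  rw [lhs_eq m, mul_div_assoc]
end
end

section
/- Let all variables be discrete. Suppose Y ⊥ Z | (A,M,X), W ⊥ (A,Z) | (M,X), completeness of W for M given (a,x), and q_a satisfies E[q_a(Z,A,X) | W, A=a', X] = p(W|a,X)/p(W|a',X). Then Σ_{y,m,x} y· p(y | m, a', x)· p(m | a, x)· p(x) = E[ I(A=a')/p(A=a'|X) · Y · q_a(Z,A,X) ]. -/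
open Finset
open scoped Classical

noncomputable section

namespace Aux

variable {O : Type} [Fintype O]

/-- numerator of conditional expectation -/
def Ns (mu : O -> Real) (f : O -> Real) (t : O -> Prop) : Real :=
  Finset.univ.sum (fun w => if t w then f w * mu w else 0)

lemma ite_irrel {p : Prop} {i1 i2 : Decidable p} (x y : Real) :
    @ite _ p i1 x y = @ite _ p i2 x y := by
  cases Subsingleton.elim i1 i2; rfl

lemma cexp_eq (mu : O -> Real) (f : O -> Real) (t : O -> Prop) :
    cexp mu f t = Ns mu f t / pr mu t := rfl

lemma pr_congr (mu : O -> Real) {s t : O -> Prop} (h : ∀ o, s o ↔ t o) :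
    pr mu s = pr mu t := by
  unfold pr; exact Finset.sum_congr rfl fun o _ => by rw [h o]

lemma Ns_congr (mu : O -> Real) {f g : O -> Real} {s t : O -> Prop}
    (hf : ∀ o, s o → f o = g o) (h : ∀ o, s o ↔ t o) :
    Ns mu f s = Ns mu g t := by
  unfold Ns
  refine Finset.sum_congr rfl fun o _ => ?_
  by_cases hs : s o
  · rw [if_pos hs, if_pos ((h o).mp hs), hf o hs]
  · rw [if_neg hs, if_neg (fun ht => hs ((h o).mpr ht))]

lemma pr_nonneg (mu : O -> Real) (hmu0 : ∀ o, 0 ≤ mu o) (t : O -> Prop) :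
    0 ≤ pr mu t := by
  refine Finset.sum_nonneg fun o _ => ?_
  by_cases h : t o <;> simp [h, hmu0 o]

lemma pr_mono (mu : O -> Real) (hmu0 : ∀ o, 0 ≤ mu o) {s t : O -> Prop}
    (h : ∀ o, s o → t o) : pr mu s ≤ pr mu t := by
  refine Finset.sum_le_sum fun o _ => ?_
  by_cases hs : s o
  · rw [if_pos hs, if_pos (h o hs)]
  · rw [if_neg hs]; by_cases ht : t o <;> simp [ht, hmu0 o]

lemma mu_eq_zero (mu : O -> Real) (hmu0 : ∀ o, 0 ≤ mu o) {t : O -> Prop}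
    (h : pr mu t = 0) {o : O} (ho : t o) : mu o = 0 := by
  have := (Finset.sum_eq_zero_iff_of_nonneg (fun o _ => by
    by_cases h' : t o <;> simp [h', hmu0 o])).mp h o (Finset.mem_univ o)
  simpa [ho] using this

lemma Ns_eq_zero (mu : O -> Real) (hmu0 : ∀ o, 0 ≤ mu o) {t : O -> Prop}
    (h : pr mu t = 0) (f : O -> Real) : Ns mu f t = 0 := by
  refine Finset.sum_eq_zero fun o _ => ?_
  by_cases ht : t o
  · rw [if_pos ht, mu_eq_zero mu hmu0 h ht, mul_zero]
  · rw [if_neg ht]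

/-- fiberwise decomposition of a conditioned sum -/
lemma fiber {V : Type} [Fintype V] [DecidableEq V] (g : O -> V) (F : O -> Real)
    (t : O -> Prop) :
    (Finset.univ.sum fun o => if t o then F o else 0) =
      Finset.univ.sum (fun v => Finset.univ.sum
        (fun o => if g o = v ∧ t o then F o else 0)) := by
  rw [Finset.sum_comm]
  refine Finset.sum_congr rfl fun o _ => ?_
  by_cases h : t o
  · simp [h, Finset.sum_ite_eq]
  · simp [h]

lemma pr_fiber {V : Type} [Fintype V] [DecidableEq V] (mu : O -> Real) (g : O -> V)
    (t : O -> Prop) :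
    pr mu t = Finset.univ.sum (fun v => pr mu (fun o => g o = v ∧ t o)) := by
  unfold pr; beta_reduce
  rw [fiber g mu t]
  exact Finset.sum_congr rfl fun v _ => Finset.sum_congr rfl fun w _ => ite_irrel _ _

lemma Ns_fiber {V : Type} [Fintype V] [DecidableEq V] (mu : O -> Real) (g : O -> V)
    (f : O -> Real) (t : O -> Prop) :
    Ns mu f t = Finset.univ.sum (fun v => Ns mu f (fun o => g o = v ∧ t o)) := by
  unfold Ns; beta_reduce
  rw [fiber g (fun o => f o * mu o) t]
  exact Finset.sum_congr rfl fun v _ => Finset.sum_congr rfl fun w _ => ite_irrel _ _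

/-- constant on the event -/
lemma Ns_const (mu : O -> Real) {f : O -> Real} {t : O -> Prop} {c : Real}
    (h : ∀ o, t o → f o = c) : Ns mu f t = c * pr mu t := by
  unfold Ns pr
  rw [Finset.mul_sum]
  refine Finset.sum_congr rfl fun o _ => ?_
  by_cases ht : t o
  · rw [if_pos ht, if_pos ht, h o ht]
  · simp [ht]

lemma Ns_image (mu : O -> Real) (Y : O -> Real) (t : O -> Prop) :
    Ns mu Y t = (Finset.image Y Finset.univ).sum
      (fun y => y * pr mu (fun o => Y o = y ∧ t o)) := by
  have h1 : ∀ y : Real, y * pr mu (fun o => Y o = y ∧ t o)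
      = Ns mu Y (fun o => Y o = y ∧ t o) := fun y =>
    (Ns_const mu (fun o ho => ho.1)).symm
  rw [Finset.sum_congr rfl fun y _ => h1 y]
  unfold Ns
  rw [Finset.sum_comm]
  refine Finset.sum_congr rfl fun o _ => ?_
  by_cases h : t o
  · simp [h, Finset.sum_ite_eq]
  · simp [h]

lemma Ns_smul (mu : O -> Real) (k : Real) (f : O -> Real) (t : O -> Prop) :
    Ns mu (fun o => k * f o) t = k * Ns mu f t := by
  unfold Ns
  rw [Finset.mul_sum]
  refine Finset.sum_congr rfl fun o _ => ?_
  by_cases h : t o <;> simp [h, mul_assoc]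

lemma Ns_restrict (mu : O -> Real) {f : O -> Real} {t s : O -> Prop}
    (h : ∀ o, t o → ¬ s o → f o = 0) :
    Ns mu f t = Ns mu f (fun o => s o ∧ t o) := by
  unfold Ns
  refine Finset.sum_congr rfl fun o _ => ?_
  by_cases ht : t o
  · by_cases hs : s o
    · rw [if_pos ht, if_pos ⟨hs, ht⟩]
    · rw [if_pos ht, if_neg (fun hc => hs hc.1), h o ht hs, zero_mul]
  · rw [if_neg ht, if_neg (fun hc => ht hc.2)]

lemma expec_fiber {V : Type} [Fintype V] [DecidableEq V] (mu : O -> Real)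
    (f : O -> Real) (g : O -> V) :
    expec mu f = Finset.univ.sum (fun v => Ns mu f (fun o => g o = v)) := by
  unfold expec Ns
  rw [Finset.sum_comm]
  refine Finset.sum_congr rfl fun o _ => ?_
  exact ((Finset.sum_eq_single (g o) (fun b _ hb => if_neg (fun h => hb (Eq.symm h)))
    (fun h => absurd (Finset.mem_univ _) h)).trans (if_pos rfl)).symm

end Aux

theorem stmt5
    {O TA TM TZ TW TX : Type}
    [Fintype O] [Fintype TA] [Fintype TM] [Fintype TZ] [Fintype TW] [Fintype TX]
    [DecidableEq TA] [DecidableEq TM] [DecidableEq TZ] [DecidableEq TW] [DecidableEq TX]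
    (mu : O -> Real) (hmu0 : forall o : O, 0 <= mu o)
    (hmu1 : Finset.univ.sum mu = 1)
    (A : O -> TA) (Y : O -> Real) (M : O -> TM) (Z : O -> TZ) (W : O -> TW) (X : O -> TX)
    (a a' : TA) (q : TZ -> TA -> TX -> Real)
    (hYZ : forall (y : Real) (z : TZ) (t : TA) (m : TM) (x : TX),
      pr mu (fun o => Y o = y /\ Z o = z /\ A o = t /\ M o = m /\ X o = x) *
        pr mu (fun o => A o = t /\ M o = m /\ X o = x) =
      pr mu (fun o => Y o = y /\ A o = t /\ M o = m /\ X o = x) *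
        pr mu (fun o => Z o = z /\ A o = t /\ M o = m /\ X o = x))
    (hWA : forall (v : TW) (t : TA) (z : TZ) (m : TM) (x : TX),
      pr mu (fun o => W o = v /\ A o = t /\ Z o = z /\ M o = m /\ X o = x) *
        pr mu (fun o => M o = m /\ X o = x) =
      pr mu (fun o => W o = v /\ M o = m /\ X o = x) *
        pr mu (fun o => A o = t /\ Z o = z /\ M o = m /\ X o = x))
    (hcomp : forall (g : TM -> Real) (t : TA) (x : TX),
      (forall v : TW, cexp mu (fun o => g (M o)) (fun o => W o = v /\ A o = t /\ X o = x) = 0) ->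
      forall m : TM, 0 < pr mu (fun o => M o = m /\ A o = t /\ X o = x) -> g m = 0)
    (hpos : forall (m : TM) (t : TA) (x : TX), 0 < pr mu (fun o => X o = x) ->
      0 < pr mu (fun o => M o = m /\ A o = t /\ X o = x))
    (hq : forall (v : TW) (x : TX),
      cexp mu (fun o => q (Z o) (A o) (X o)) (fun o => W o = v /\ A o = a' /\ X o = x) =
      cpr mu (fun o => W o = v) (fun o => A o = a /\ X o = x) /
        cpr mu (fun o => W o = v) (fun o => A o = a' /\ X o = x)) :
    Finset.univ.sum (fun x : TX =>
      (Finset.univ.sum (fun m : TM =>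
        cexp mu Y (fun o => M o = m /\ A o = a' /\ X o = x) *
          cpr mu (fun o => M o = m) (fun o => A o = a /\ X o = x))) *
        pr mu (fun o => X o = x)) =
    expec mu (fun o =>
      (if A o = a' then (1 : Real) else 0) /
          cpr mu (fun o' => A o' = a') (fun o' => X o' = X o) *
        Y o * q (Z o) (A o) (X o)) := by
  classical
  have hO : Nonempty O := by
    by_contra h
    rw [not_nonempty_iff] at h
    rw [Finset.univ_eq_empty, Finset.sum_empty] at hmu1
    exact one_ne_zero hmu1.symm
  obtain ⟨o₀⟩ := hO
  have hTM : (Finset.univ : Finset TM).Nonempty := ⟨M o₀, Finset.mem_univ _⟩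
  have hRHS : expec mu (fun o =>
      (if A o = a' then (1 : Real) else 0) /
          cpr mu (fun o' => A o' = a') (fun o' => X o' = X o) *
        Y o * q (Z o) (A o) (X o)) =
      Finset.univ.sum (fun x : TX =>
        (1 / cpr mu (fun o' => A o' = a') (fun o' => X o' = x)) *
          Aux.Ns mu (fun o => Y o * q (Z o) (A o) (X o))
            (fun o => A o = a' ∧ X o = x)) := by
    rw [Aux.expec_fiber mu _ X]
    refine Finset.sum_congr rfl fun x _ => ?_
    rw [Aux.Ns_restrict mu (s := fun o => A o = a')
      (fun o ht hs => by rw [if_neg hs, zero_div, zero_mul, zero_mul])]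
    exact (Aux.Ns_congr mu
      (g := fun o => (1 / cpr mu (fun o' => A o' = a') (fun o' => X o' = x)) *
        (Y o * q (Z o) (A o) (X o)))
      (fun o ho => by
        rw [if_pos ho.1,
          show (fun o' => X o' = X o) = (fun o' => X o' = x) from by rw [ho.2]]
        ring)
      (fun o => Iff.rfl)).trans (Aux.Ns_smul mu _ _ _)
  rw [hRHS]
  refine Finset.sum_congr rfl fun x _ => ?_
  by_cases hx : 0 < pr mu (fun o => X o = x)
  case neg =>
    have hx0 : pr mu (fun o => X o = x) = 0 :=
      le_antisymm (not_lt.mp hx) (Aux.pr_nonneg mu hmu0 _)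
    have ha0 : pr mu (fun o => A o = a' ∧ X o = x) = 0 :=
      le_antisymm (hx0 ▸ Aux.pr_mono mu hmu0 (fun o h => h.2)) (Aux.pr_nonneg mu hmu0 _)
    rw [hx0, mul_zero, Aux.Ns_eq_zero mu hmu0 ha0, mul_zero]
  case pos =>
    have hPm : ∀ (m : TM) (t : TA), 0 < pr mu (fun o => M o = m ∧ A o = t ∧ X o = x) :=
      fun m t => hpos m t x hx
    have hPmne : ∀ (m : TM) (t : TA),
        pr mu (fun o => M o = m ∧ A o = t ∧ X o = x) ≠ 0 :=
      fun m t => ne_of_gt (hPm m t)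
    have hPmx : ∀ m : TM, 0 < pr mu (fun o => M o = m ∧ X o = x) :=
      fun m => lt_of_lt_of_le (hPm m a')
        (Aux.pr_mono mu hmu0 (fun o h => ⟨h.1, h.2.2⟩))
    have hPmxne : ∀ m : TM, pr mu (fun o => M o = m ∧ X o = x) ≠ 0 :=
      fun m => ne_of_gt (hPmx m)
    have hPt : ∀ t : TA, pr mu (fun o => A o = t ∧ X o = x) =
        Finset.univ.sum (fun m : TM =>
          pr mu (fun o => M o = m ∧ A o = t ∧ X o = x)) := by
      intro t
      rw [Aux.pr_fiber mu M (fun o => A o = t ∧ X o = x)]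
    have hPtpos : ∀ t : TA, 0 < pr mu (fun o => A o = t ∧ X o = x) := fun t => by
      rw [hPt t]; exact Finset.sum_pos (fun m _ => hPm m t) hTM
    have hPtne : ∀ t : TA, pr mu (fun o => A o = t ∧ X o = x) ≠ 0 :=
      fun t => ne_of_gt (hPtpos t)
    -- z-level W-independence, reordered
    have hWA1 : ∀ (v : TW) (t : TA) (z : TZ) (m : TM),
        pr mu (fun o => Z o = z ∧ M o = m ∧ W o = v ∧ A o = t ∧ X o = x) *
          pr mu (fun o => M o = m ∧ X o = x) =
        pr mu (fun o => W o = v ∧ M o = m ∧ X o = x) *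
          pr mu (fun o => Z o = z ∧ M o = m ∧ A o = t ∧ X o = x) := by
      intro v t z m
      have e1 : pr mu (fun o => Z o = z ∧ M o = m ∧ W o = v ∧ A o = t ∧ X o = x)
          = pr mu (fun o => W o = v ∧ A o = t ∧ Z o = z ∧ M o = m ∧ X o = x) :=
        Aux.pr_congr mu (fun o => by tauto)
      have e2 : pr mu (fun o => Z o = z ∧ M o = m ∧ A o = t ∧ X o = x)
          = pr mu (fun o => A o = t ∧ Z o = z ∧ M o = m ∧ X o = x) :=
        Aux.pr_congr mu (fun o => by tauto)
      rw [e1, e2]; exact hWA v t z m x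
    -- m-level W-independence
    have hWA2 : ∀ (v : TW) (t : TA) (m : TM),
        pr mu (fun o => M o = m ∧ W o = v ∧ A o = t ∧ X o = x) *
          pr mu (fun o => M o = m ∧ X o = x) =
        pr mu (fun o => W o = v ∧ M o = m ∧ X o = x) *
          pr mu (fun o => M o = m ∧ A o = t ∧ X o = x) := by
      intro v t m
      have e1 : pr mu (fun o => M o = m ∧ W o = v ∧ A o = t ∧ X o = x)
          = Finset.univ.sum (fun z : TZ =>
            pr mu (fun o => Z o = z ∧ M o = m ∧ W o = v ∧ A o = t ∧ X o = x)) := by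
        rw [Aux.pr_fiber mu Z (fun o => M o = m ∧ W o = v ∧ A o = t ∧ X o = x)]
      have e2 : pr mu (fun o => M o = m ∧ A o = t ∧ X o = x)
          = Finset.univ.sum (fun z : TZ =>
            pr mu (fun o => Z o = z ∧ M o = m ∧ A o = t ∧ X o = x)) := by
        rw [Aux.pr_fiber mu Z (fun o => M o = m ∧ A o = t ∧ X o = x)]
      rw [e1, e2, Finset.sum_mul, Finset.mul_sum]
      exact Finset.sum_congr rfl fun z _ => hWA1 v t z m
    -- expansion of the q-numerator over z
    have hK : ∀ m : TM, Aux.Ns mu (fun o => q (Z o) (A o) (X o))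
          (fun o => M o = m ∧ A o = a' ∧ X o = x) =
        Finset.univ.sum (fun z : TZ => q z a' x *
          pr mu (fun o => Z o = z ∧ M o = m ∧ A o = a' ∧ X o = x)) := by
      intro m
      rw [Aux.Ns_fiber mu Z (fun o => q (Z o) (A o) (X o))
        (fun o => M o = m ∧ A o = a' ∧ X o = x)]
      exact Finset.sum_congr rfl fun z _ =>
        Aux.Ns_const mu (fun o ho => by rw [ho.1, ho.2.2.1, ho.2.2.2])
    -- the treatment-bridge identity, via completeness
    have hg0 : ∀ m : TM,
        Aux.Ns mu (fun o => q (Z o) (A o) (X o))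
            (fun o => M o = m ∧ A o = a' ∧ X o = x) /
          pr mu (fun o => M o = m ∧ A o = a' ∧ X o = x) -
        pr mu (fun o => M o = m ∧ A o = a ∧ X o = x) *
            pr mu (fun o => A o = a' ∧ X o = x) /
          (pr mu (fun o => A o = a ∧ X o = x) *
            pr mu (fun o => M o = m ∧ A o = a' ∧ X o = x)) = 0 := by
      intro m
      refine hcomp (fun m' =>
        Aux.Ns mu (fun o => q (Z o) (A o) (X o))
            (fun o => M o = m' ∧ A o = a' ∧ X o = x) /
          pr mu (fun o => M o = m' ∧ A o = a' ∧ X o = x) -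
        pr mu (fun o => M o = m' ∧ A o = a ∧ X o = x) *
            pr mu (fun o => A o = a' ∧ X o = x) /
          (pr mu (fun o => A o = a ∧ X o = x) *
            pr mu (fun o => M o = m' ∧ A o = a' ∧ X o = x))) a' x ?_ m (hPm m a')
      intro v
      rw [Aux.cexp_eq]
      by_cases hv : 0 < pr mu (fun o => W o = v ∧ A o = a' ∧ X o = x)
      case neg =>
        have hv0 : pr mu (fun o => W o = v ∧ A o = a' ∧ X o = x) = 0 :=
          le_antisymm (not_lt.mp hv) (Aux.pr_nonneg mu hmu0 _)
        rw [Aux.Ns_eq_zero mu hmu0 hv0, zero_div]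
      case pos =>
      suffices hNs : Aux.Ns mu (fun o =>
          Aux.Ns mu (fun o' => q (Z o') (A o') (X o'))
              (fun o' => M o' = M o ∧ A o' = a' ∧ X o' = x) /
            pr mu (fun o' => M o' = M o ∧ A o' = a' ∧ X o' = x) -
          pr mu (fun o' => M o' = M o ∧ A o' = a ∧ X o' = x) *
              pr mu (fun o' => A o' = a' ∧ X o' = x) /
            (pr mu (fun o' => A o' = a ∧ X o' = x) *
              pr mu (fun o' => M o' = M o ∧ A o' = a' ∧ X o' = x)))
          (fun o => W o = v ∧ A o = a' ∧ X o = x) = 0 by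
        rw [hNs, zero_div]
      -- q-numerator over the (m,v) cells
      have hKv : ∀ m' : TM, Aux.Ns mu (fun o => q (Z o) (A o) (X o))
            (fun o => M o = m' ∧ W o = v ∧ A o = a' ∧ X o = x) =
          Finset.univ.sum (fun z : TZ => q z a' x *
            pr mu (fun o => Z o = z ∧ M o = m' ∧ W o = v ∧ A o = a' ∧ X o = x)) := by
        intro m'
        rw [Aux.Ns_fiber mu Z (fun o => q (Z o) (A o) (X o))
          (fun o => M o = m' ∧ W o = v ∧ A o = a' ∧ X o = x)]
        exact Finset.sum_congr rfl fun z _ =>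
          Aux.Ns_const mu (fun o ho => by rw [ho.1, ho.2.2.2.1, ho.2.2.2.2])
      have e_nqv : ∀ m' : TM,
          Aux.Ns mu (fun o => q (Z o) (A o) (X o))
              (fun o => M o = m' ∧ W o = v ∧ A o = a' ∧ X o = x) *
            pr mu (fun o => M o = m' ∧ X o = x) =
          pr mu (fun o => W o = v ∧ M o = m' ∧ X o = x) *
            Aux.Ns mu (fun o => q (Z o) (A o) (X o))
              (fun o => M o = m' ∧ A o = a' ∧ X o = x) := by
        intro m'
        rw [hKv m', hK m', Finset.sum_mul, Finset.mul_sum]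
        refine Finset.sum_congr rfl fun z _ => ?_
        linear_combination q z a' x * hWA1 v a' z m'
      -- value of the q-numerator on the full (v,a',x) cell, from hq
      have F3 : Aux.Ns mu (fun o => q (Z o) (A o) (X o))
            (fun o => W o = v ∧ A o = a' ∧ X o = x) =
          pr mu (fun o => W o = v ∧ A o = a ∧ X o = x) *
            pr mu (fun o => A o = a' ∧ X o = x) /
            pr mu (fun o => A o = a ∧ X o = x) := by
        have h := hq v x
        rw [Aux.cexp_eq] at h
        simp only [cpr] at h
        rw [div_eq_iff (ne_of_gt hv)] at h
        rw [h]
        field_simp [hPtne a, hPtne a', ne_of_gt hv]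
      -- per-cell evaluation
      have term : ∀ m' : TM, Aux.Ns mu (fun o =>
          Aux.Ns mu (fun o' => q (Z o') (A o') (X o'))
              (fun o' => M o' = M o ∧ A o' = a' ∧ X o' = x) /
            pr mu (fun o' => M o' = M o ∧ A o' = a' ∧ X o' = x) -
          pr mu (fun o' => M o' = M o ∧ A o' = a ∧ X o' = x) *
              pr mu (fun o' => A o' = a' ∧ X o' = x) /
            (pr mu (fun o' => A o' = a ∧ X o' = x) *
              pr mu (fun o' => M o' = M o ∧ A o' = a' ∧ X o' = x)))
          (fun o => M o = m' ∧ W o = v ∧ A o = a' ∧ X o = x) =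
          Aux.Ns mu (fun o => q (Z o) (A o) (X o))
              (fun o => M o = m' ∧ W o = v ∧ A o = a' ∧ X o = x) -
            pr mu (fun o => M o = m' ∧ W o = v ∧ A o = a ∧ X o = x) *
              pr mu (fun o => A o = a' ∧ X o = x) /
              pr mu (fun o => A o = a ∧ X o = x) := by
        intro m'
        rw [Aux.Ns_const mu (fun o ho => by rw [ho.1])]
        have f1 : pr mu (fun o => M o = m' ∧ W o = v ∧ A o = a' ∧ X o = x) =
            pr mu (fun o => W o = v ∧ M o = m' ∧ X o = x) *
              pr mu (fun o => M o = m' ∧ A o = a' ∧ X o = x) /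
              pr mu (fun o => M o = m' ∧ X o = x) := by
          rw [eq_div_iff (hPmxne m')]; exact hWA2 v a' m'
        have f2 : Aux.Ns mu (fun o => q (Z o) (A o) (X o))
              (fun o => M o = m' ∧ W o = v ∧ A o = a' ∧ X o = x) =
            pr mu (fun o => W o = v ∧ M o = m' ∧ X o = x) *
              Aux.Ns mu (fun o => q (Z o) (A o) (X o))
                (fun o => M o = m' ∧ A o = a' ∧ X o = x) /
              pr mu (fun o => M o = m' ∧ X o = x) := by
          rw [eq_div_iff (hPmxne m')]; exact e_nqv m'
        have f3 : pr mu (fun o => M o = m' ∧ W o = v ∧ A o = a ∧ X o = x) =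
            pr mu (fun o => W o = v ∧ M o = m' ∧ X o = x) *
              pr mu (fun o => M o = m' ∧ A o = a ∧ X o = x) /
              pr mu (fun o => M o = m' ∧ X o = x) := by
          rw [eq_div_iff (hPmxne m')]; exact hWA2 v a m'
        rw [f1, f2, f3]
        field_simp [hPmne m' a', hPtne a, hPmxne m']
      rw [Aux.Ns_fiber mu M _ (fun o => W o = v ∧ A o = a' ∧ X o = x)]
      rw [Finset.sum_congr rfl fun m' _ => term m']
      rw [Finset.sum_sub_distrib]
      have F4 : Finset.univ.sum (fun m' : TM =>
          Aux.Ns mu (fun o => q (Z o) (A o) (X o))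
            (fun o => M o = m' ∧ W o = v ∧ A o = a' ∧ X o = x)) =
          Aux.Ns mu (fun o => q (Z o) (A o) (X o))
            (fun o => W o = v ∧ A o = a' ∧ X o = x) := by
        rw [Aux.Ns_fiber mu M (fun o => q (Z o) (A o) (X o))
          (fun o => W o = v ∧ A o = a' ∧ X o = x)]
      have F5 : Finset.univ.sum (fun m' : TM =>
          pr mu (fun o => M o = m' ∧ W o = v ∧ A o = a ∧ X o = x)) =
          pr mu (fun o => W o = v ∧ A o = a ∧ X o = x) := by
        rw [Aux.pr_fiber mu M (fun o => W o = v ∧ A o = a ∧ X o = x)]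
      rw [show (Finset.univ.sum fun m' : TM =>
          pr mu (fun o => M o = m' ∧ W o = v ∧ A o = a ∧ X o = x) *
            pr mu (fun o => A o = a' ∧ X o = x) /
            pr mu (fun o => A o = a ∧ X o = x)) =
          (Finset.univ.sum fun m' : TM =>
            pr mu (fun o => M o = m' ∧ W o = v ∧ A o = a ∧ X o = x)) *
            pr mu (fun o => A o = a' ∧ X o = x) /
            pr mu (fun o => A o = a ∧ X o = x) from by
        rw [← Finset.sum_div, ← Finset.sum_mul]]
      rw [F4, F5, F3, sub_self]
    have hbridge : ∀ m : TM,
        Aux.Ns mu (fun o => q (Z o) (A o) (X o))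
            (fun o => M o = m ∧ A o = a' ∧ X o = x) =
          pr mu (fun o => M o = m ∧ A o = a ∧ X o = x) *
            pr mu (fun o => A o = a' ∧ X o = x) /
            pr mu (fun o => A o = a ∧ X o = x) := by
      intro m
      have h2 := sub_eq_zero.mp (hg0 m)
      rw [div_eq_div_iff (hPmne m a') (mul_ne_zero (hPtne a) (hPmne m a'))] at h2
      rw [eq_div_iff (hPtne a)]
      exact mul_right_cancel₀ (hPmne m a') (by linear_combination h2)
    -- conditional uncorrelatedness of Y and q given (m, a', x)
    have stepC : ∀ m : TM,
        Aux.Ns mu (fun o => Y o * q (Z o) (A o) (X o))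
            (fun o => M o = m ∧ A o = a' ∧ X o = x) *
          pr mu (fun o => M o = m ∧ A o = a' ∧ X o = x) =
        Aux.Ns mu Y (fun o => M o = m ∧ A o = a' ∧ X o = x) *
          Aux.Ns mu (fun o => q (Z o) (A o) (X o))
            (fun o => M o = m ∧ A o = a' ∧ X o = x) := by
      intro m
      have hNG : Aux.Ns mu (fun o => Y o * q (Z o) (A o) (X o))
            (fun o => M o = m ∧ A o = a' ∧ X o = x) =
          Finset.univ.sum (fun z : TZ => q z a' x *
            Aux.Ns mu Y (fun o => Z o = z ∧ M o = m ∧ A o = a' ∧ X o = x)) := by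
        rw [Aux.Ns_fiber mu Z (fun o => Y o * q (Z o) (A o) (X o))
          (fun o => M o = m ∧ A o = a' ∧ X o = x)]
        refine Finset.sum_congr rfl fun z _ => ?_
        exact (Aux.Ns_congr mu (g := fun o => q z a' x * Y o)
          (fun o ho => by rw [ho.1, ho.2.2.1, ho.2.2.2]; ring)
          (fun o => Iff.rfl)).trans (Aux.Ns_smul mu _ _ _)
      have hYZ2 : ∀ z : TZ,
          Aux.Ns mu Y (fun o => Z o = z ∧ M o = m ∧ A o = a' ∧ X o = x) *
            pr mu (fun o => M o = m ∧ A o = a' ∧ X o = x) =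
          Aux.Ns mu Y (fun o => M o = m ∧ A o = a' ∧ X o = x) *
            pr mu (fun o => Z o = z ∧ M o = m ∧ A o = a' ∧ X o = x) := by
        intro z
        rw [Aux.Ns_image mu Y (fun o => Z o = z ∧ M o = m ∧ A o = a' ∧ X o = x),
          Aux.Ns_image mu Y (fun o => M o = m ∧ A o = a' ∧ X o = x),
          Finset.sum_mul, Finset.sum_mul]
        refine Finset.sum_congr rfl fun y _ => ?_
        show y * pr mu (fun o => Y o = y ∧ Z o = z ∧ M o = m ∧ A o = a' ∧ X o = x) *
            pr mu (fun o => M o = m ∧ A o = a' ∧ X o = x) =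
          y * pr mu (fun o => Y o = y ∧ M o = m ∧ A o = a' ∧ X o = x) *
            pr mu (fun o => Z o = z ∧ M o = m ∧ A o = a' ∧ X o = x)
        have r1 : pr mu (fun o => Y o = y ∧ Z o = z ∧ M o = m ∧ A o = a' ∧ X o = x)
            = pr mu (fun o => Y o = y ∧ Z o = z ∧ A o = a' ∧ M o = m ∧ X o = x) :=
          Aux.pr_congr mu (fun o => by tauto)
        have r2 : pr mu (fun o => M o = m ∧ A o = a' ∧ X o = x)
            = pr mu (fun o => A o = a' ∧ M o = m ∧ X o = x) :=
          Aux.pr_congr mu (fun o => by tauto)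
        have r3 : pr mu (fun o => Y o = y ∧ M o = m ∧ A o = a' ∧ X o = x)
            = pr mu (fun o => Y o = y ∧ A o = a' ∧ M o = m ∧ X o = x) :=
          Aux.pr_congr mu (fun o => by tauto)
        have r4 : pr mu (fun o => Z o = z ∧ M o = m ∧ A o = a' ∧ X o = x)
            = pr mu (fun o => Z o = z ∧ A o = a' ∧ M o = m ∧ X o = x) :=
          Aux.pr_congr mu (fun o => by tauto)
        rw [r1, r2, r3, r4]
        linear_combination y * hYZ y z a' m x
      rw [hNG, Finset.sum_mul, hK m, Finset.mul_sum]
      refine Finset.sum_congr rfl fun z _ => ?_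
      linear_combination q z a' x * hYZ2 z
    -- assemble
    have hGdecomp : Aux.Ns mu (fun o => Y o * q (Z o) (A o) (X o))
          (fun o => A o = a' ∧ X o = x) =
        Finset.univ.sum (fun m : TM =>
          Aux.Ns mu Y (fun o => M o = m ∧ A o = a' ∧ X o = x) *
            (pr mu (fun o => M o = m ∧ A o = a ∧ X o = x) *
              pr mu (fun o => A o = a' ∧ X o = x) /
              pr mu (fun o => A o = a ∧ X o = x)) /
            pr mu (fun o => M o = m ∧ A o = a' ∧ X o = x)) := by
      rw [Aux.Ns_fiber mu M (fun o => Y o * q (Z o) (A o) (X o))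
        (fun o => A o = a' ∧ X o = x)]
      refine Finset.sum_congr rfl fun m _ => ?_
      have h1 : Aux.Ns mu (fun o => Y o * q (Z o) (A o) (X o))
            (fun o => M o = m ∧ A o = a' ∧ X o = x) =
          Aux.Ns mu Y (fun o => M o = m ∧ A o = a' ∧ X o = x) *
            Aux.Ns mu (fun o => q (Z o) (A o) (X o))
              (fun o => M o = m ∧ A o = a' ∧ X o = x) /
            pr mu (fun o => M o = m ∧ A o = a' ∧ X o = x) := by
        rw [eq_div_iff (hPmne m a')]; exact stepC m
      rw [hbridge m] at h1
      exact h1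
    have hcprx : cpr mu (fun o' => A o' = a') (fun o' => X o' = x) =
        pr mu (fun o => A o = a' ∧ X o = x) / pr mu (fun o => X o = x) := rfl
    have hsum : (Finset.univ.sum (fun m : TM =>
        cexp mu Y (fun o => M o = m ∧ A o = a' ∧ X o = x) *
          cpr mu (fun o => M o = m) (fun o => A o = a ∧ X o = x))) =
        Finset.univ.sum (fun m : TM =>
          (Aux.Ns mu Y (fun o => M o = m ∧ A o = a' ∧ X o = x) /
            pr mu (fun o => M o = m ∧ A o = a' ∧ X o = x)) *
          (pr mu (fun o => M o = m ∧ A o = a ∧ X o = x) /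
            pr mu (fun o => A o = a ∧ X o = x))) := rfl
    rw [hsum, hGdecomp, hcprx, one_div_div, Finset.sum_mul, Finset.mul_sum]
    refine Finset.sum_congr rfl fun m _ => ?_
    field_simp [hPmne m a', hPtne a, hPtne a', ne_of_gt hx]
end
end

section
/- Let A, Z, W, X be discrete with positivity, and suppose q_a satisfies Σ_z q_a(z, a', x)· p(z | w, a', x) = p(w | a, x)/p(w | a', x) for all w, a', x, and h is any function of (W,A,X). Then E[ I(A=a')/p(A=a'|X) · q_a(Z,A,X)· h(W,A,X) ] = E[ I(A=a)/p(A=a|X) · h(W,a',X) ]. -/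
open Finset
open scoped Classical

noncomputable section

lemma pr_nonneg' {O : Type} [Fintype O] (mu : O -> Real) (hmu0 : forall o : O, 0 <= mu o)
    (s : O -> Prop) : 0 <= pr mu s := by
  apply Finset.sum_nonneg
  intro o _
  by_cases hs : s o <;> simp [hs, hmu0 o]

lemma pr_mono' {O : Type} [Fintype O] (mu : O -> Real) (hmu0 : forall o : O, 0 <= mu o)
    {s t : O -> Prop} (hst : forall o, s o -> t o) : pr mu s <= pr mu t := by
  apply Finset.sum_le_sum
  intro o _
  by_cases hs : s o
  · rw [if_pos hs, if_pos (hst o hs)]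
  · rw [if_neg hs]
    by_cases ht : t o <;> simp [ht, hmu0 o]

lemma pr_zero_of_sub {O : Type} [Fintype O] (mu : O -> Real) (hmu0 : forall o : O, 0 <= mu o)
    {s t : O -> Prop} (hst : forall o, s o -> t o) (ht : pr mu t = 0) : pr mu s = 0 :=
  le_antisymm (ht ▸ pr_mono' mu hmu0 hst) (pr_nonneg' mu hmu0 s)

theorem stmt7
    {O TA TM TZ TW TX : Type}
    [Fintype O] [Fintype TA] [Fintype TM] [Fintype TZ] [Fintype TW] [Fintype TX]
    [DecidableEq TA] [DecidableEq TM] [DecidableEq TZ] [DecidableEq TW] [DecidableEq TX]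
    (mu : O -> Real) (hmu0 : forall o : O, 0 <= mu o)
    (hmu1 : Finset.univ.sum mu = 1)
    (A : O -> TA) (Y : O -> Real) (M : O -> TM) (Z : O -> TZ) (W : O -> TW) (X : O -> TX)
    (a a' : TA) (q : TZ -> TA -> TX -> Real) (h : TW -> TA -> TX -> Real)
    (hq : forall (v : TW) (t : TA) (x : TX),
      Finset.univ.sum (fun z : TZ =>
        q z t x * cpr mu (fun o => Z o = z) (fun o => W o = v /\ A o = t /\ X o = x)) =
      cpr mu (fun o => W o = v) (fun o => A o = a /\ X o = x) /
        cpr mu (fun o => W o = v) (fun o => A o = t /\ X o = x))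
    (hpa : forall x : TX, 0 < pr mu (fun o => X o = x) ->
      0 < pr mu (fun o => A o = a /\ X o = x))
    (hpa' : forall x : TX, 0 < pr mu (fun o => X o = x) ->
      0 < pr mu (fun o => A o = a' /\ X o = x))
    (hpw : forall (v : TW) (x : TX), 0 < pr mu (fun o => X o = x) ->
      0 < pr mu (fun o => W o = v /\ A o = a' /\ X o = x)) :
    expec mu (fun o =>
      (if A o = a' then (1 : Real) else 0) /
          cpr mu (fun o' => A o' = a') (fun o' => X o' = X o) *
        q (Z o) (A o) (X o) * h (W o) (A o) (X o)) =
    expec mu (fun o =>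
      (if A o = a then (1 : Real) else 0) /
          cpr mu (fun o' => A o' = a) (fun o' => X o' = X o) *
        h (W o) a' (X o)) := by
  classical
  -- key per (x, w) identity
  have key : ∀ (x : TX) (w : TW),
      Finset.univ.sum (fun z : TZ =>
        q z a' x * h w a' x / cpr mu (fun o' => A o' = a') (fun o' => X o' = x) *
          pr mu (fun o => Z o = z ∧ W o = w ∧ A o = a' ∧ X o = x)) =
      h w a' x / cpr mu (fun o' => A o' = a) (fun o' => X o' = x) *
        pr mu (fun o => W o = w ∧ A o = a ∧ X o = x) := by
    intro x w
    by_cases px : 0 < pr mu (fun o => X o = x)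
    · have hPA : pr mu (fun o => A o = a ∧ X o = x) ≠ 0 := ne_of_gt (hpa x px)
      have hPA' : pr mu (fun o => A o = a' ∧ X o = x) ≠ 0 := ne_of_gt (hpa' x px)
      have hPW : pr mu (fun o => W o = w ∧ A o = a' ∧ X o = x) ≠ 0 := ne_of_gt (hpw w x px)
      have hPX : pr mu (fun o => X o = x) ≠ 0 := ne_of_gt px
      have hsum : Finset.univ.sum (fun z : TZ => q z a' x *
          pr mu (fun o => Z o = z ∧ W o = w ∧ A o = a' ∧ X o = x)) =
          (cpr mu (fun o => W o = w) (fun o => A o = a ∧ X o = x) /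
           cpr mu (fun o => W o = w) (fun o => A o = a' ∧ X o = x)) *
          pr mu (fun o => W o = w ∧ A o = a' ∧ X o = x) := by
        rw [← hq w a' x, Finset.sum_mul]
        refine Finset.sum_congr rfl fun z _ => ?_
        unfold cpr
        rw [mul_assoc, div_mul_cancel₀ _ hPW]
      have step : Finset.univ.sum (fun z : TZ =>
          q z a' x * h w a' x / cpr mu (fun o' => A o' = a') (fun o' => X o' = x) *
            pr mu (fun o => Z o = z ∧ W o = w ∧ A o = a' ∧ X o = x)) =
          (h w a' x / cpr mu (fun o' => A o' = a') (fun o' => X o' = x)) *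
          Finset.univ.sum (fun z : TZ => q z a' x *
            pr mu (fun o => Z o = z ∧ W o = w ∧ A o = a' ∧ X o = x)) := by
        rw [Finset.mul_sum]
        refine Finset.sum_congr rfl fun z _ => ?_
        ring
      rw [step, hsum]
      unfold cpr
      field_simp
    · have px0 : pr mu (fun o => X o = x) = 0 :=
        le_antisymm (not_lt.mp px) (pr_nonneg' mu hmu0 _)
      have h1 : ∀ z : TZ, pr mu (fun o => Z o = z ∧ W o = w ∧ A o = a' ∧ X o = x) = 0 :=
        fun z => pr_zero_of_sub mu hmu0 (fun o ho => ho.2.2.2) px0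
      have h2 : pr mu (fun o => W o = w ∧ A o = a ∧ X o = x) = 0 :=
        pr_zero_of_sub mu hmu0 (fun o ho => ho.2.2) px0
      simp [h1, h2]
  -- rewrite LHS as triple sum
  have L : expec mu (fun o =>
      (if A o = a' then (1 : Real) else 0) /
          cpr mu (fun o' => A o' = a') (fun o' => X o' = X o) *
        q (Z o) (A o) (X o) * h (W o) (A o) (X o)) =
      Finset.univ.sum (fun x : TX => Finset.univ.sum (fun w : TW =>
        Finset.univ.sum (fun z : TZ =>
          q z a' x * h w a' x / cpr mu (fun o' => A o' = a') (fun o' => X o' = x) *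
            pr mu (fun o => Z o = z ∧ W o = w ∧ A o = a' ∧ X o = x)))) := by
    unfold expec
    have point : ∀ o : O,
        (if A o = a' then (1 : Real) else 0) /
            cpr mu (fun o' => A o' = a') (fun o' => X o' = X o) *
          q (Z o) (A o) (X o) * h (W o) (A o) (X o) * mu o =
        Finset.univ.sum (fun x : TX => Finset.univ.sum (fun w : TW =>
          Finset.univ.sum (fun z : TZ =>
            if Z o = z ∧ W o = w ∧ A o = a' ∧ X o = x then
              q z a' x * h w a' x / cpr mu (fun o' => A o' = a') (fun o' => X o' = x) * mu o
            else 0))) := by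
      intro o
      by_cases hA : A o = a'
      · simp [hA, ite_and, Finset.sum_ite_eq]
        exact Or.inl (by ring)
      · simp [hA]
    rw [Finset.sum_congr rfl (fun o _ => point o)]
    rw [Finset.sum_comm]
    refine Finset.sum_congr rfl fun x _ => ?_
    rw [Finset.sum_comm]
    refine Finset.sum_congr rfl fun w _ => ?_
    rw [Finset.sum_comm]
    refine Finset.sum_congr rfl fun z _ => ?_
    unfold pr
    rw [Finset.mul_sum]
    refine Finset.sum_congr rfl fun o _ => ?_
    by_cases hc : Z o = z ∧ W o = w ∧ A o = a' ∧ X o = x <;> simp [hc]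
  -- rewrite RHS as double sum
  have R : expec mu (fun o =>
      (if A o = a then (1 : Real) else 0) /
          cpr mu (fun o' => A o' = a) (fun o' => X o' = X o) *
        h (W o) a' (X o)) =
      Finset.univ.sum (fun x : TX => Finset.univ.sum (fun w : TW =>
        h w a' x / cpr mu (fun o' => A o' = a) (fun o' => X o' = x) *
          pr mu (fun o => W o = w ∧ A o = a ∧ X o = x))) := by
    unfold expec
    have point : ∀ o : O,
        (if A o = a then (1 : Real) else 0) /
            cpr mu (fun o' => A o' = a) (fun o' => X o' = X o) *
          h (W o) a' (X o) * mu o =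
        Finset.univ.sum (fun x : TX => Finset.univ.sum (fun w : TW =>
          if W o = w ∧ A o = a ∧ X o = x then
            h w a' x / cpr mu (fun o' => A o' = a) (fun o' => X o' = x) * mu o
          else 0)) := by
      intro o
      by_cases hA : A o = a
      · simp [hA, ite_and, Finset.sum_ite_eq]
        exact Or.inl (by ring)
      · simp [hA]
    rw [Finset.sum_congr rfl (fun o _ => point o)]
    rw [Finset.sum_comm]
    refine Finset.sum_congr rfl fun x _ => ?_
    rw [Finset.sum_comm]
    refine Finset.sum_congr rfl fun w _ => ?_
    unfold pr
    rw [Finset.mul_sum]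
    refine Finset.sum_congr rfl fun o _ => ?_
    by_cases hc : W o = w ∧ A o = a ∧ X o = x <;> simp [hc]
  rw [L, R]
  exact Finset.sum_congr rfl fun x _ => Finset.sum_congr rfl fun w _ => key x w
end
end
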